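/- arXiv:2407.17153 — 17 statements merged into one kernel-verified Lean document; each statement's English description precedes it below -/
import Mathlib

section
/- If S is a numerical semigroup with S ≠ ℕ such that every odd element x of S satisfies x-1 ∈ S and x+1 ∈ S, then the multiplicity of S (the least positive element of S) is even and the Frobenius number of S (the largest integer not in S) is odd. -/
open Pointwise

/-- A numerical semigroup: a submonoid of (ℕ,+) with finite complement. -/
def IsNumSgrp (S : Set ℕ) : Prop :=
  0 ∈ S ∧ (∀ a b, a ∈ S → b ∈ S → a + b ∈ S) ∧ {x : ℕ | x ∉ S}.Finite

/-- A Coe-semigroup: a numerical semigroup containing x-1 and x+1 for each odd x ∈ S. -/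
def IsCoe (S : Set ℕ) : Prop :=
  IsNumSgrp S ∧ ∀ x ∈ S, Odd x → x - 1 ∈ S ∧ x + 1 ∈ S

/-- The Frobenius number: the largest natural number not in S (for S ≠ ℕ). -/
noncomputable def frob (S : Set ℕ) : ℕ := sSup {x : ℕ | x ∉ S}

/-- The multiplicity: the least nonzero element of S. -/
noncomputable def mult (S : Set ℕ) : ℕ := sInf {x : ℕ | x ∈ S ∧ x ≠ 0}

/-- The genus: the number of gaps of S. -/
noncomputable def genus (S : Set ℕ) : ℕ := {x : ℕ | x ∉ S}.ncard

/-- The minimal system of generators of a numerical semigroup: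
nonzero elements that are not a sum of two nonzero elements. -/
def msg (S : Set ℕ) : Set ℕ :=
  (S \ {0}) \ {x | ∃ a ∈ S \ {0}, ∃ b ∈ S \ {0}, x = a + b}

theorem stmt_0 (S : Set ℕ) (hS : IsNumSgrp S) (hne : S ≠ Set.univ)
    (hcoe : ∀ x ∈ S, Odd x → x - 1 ∈ S ∧ x + 1 ∈ S) :
    Even (mult S) ∧ Odd (frob S) := by
  obtain ⟨h0, hadd, hfin⟩ := hS
  -- gaps are nonempty
  have hgne : {x : ℕ | x ∉ S}.Nonempty := by
    by_contra h
    apply hne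
    rw [Set.not_nonempty_iff_eq_empty] at h
    ext x
    simp only [Set.mem_univ, iff_true]
    by_contra hx
    rw [Set.eq_empty_iff_forall_notMem] at h
    exact h x hx
  have hbdd : BddAbove {x : ℕ | x ∉ S} := hfin.bddAbove
  -- frob is a gap
  have hfrob_gap : frob S ∉ S := Nat.sSup_mem hgne hbdd
  -- everything above frob is in S
  have habove : ∀ x, frob S < x → x ∈ S := by
    intro x hx
    by_contra hxS
    exact absurd (le_csSup hbdd hxS) (not_le.mpr hx)
  -- frob is odd
  have hfodd : Odd (frob S) := by
    rw [Nat.not_even_iff_odd.symm]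
    intro hfe
    have h1 : frob S + 1 ∈ S := habove _ (Nat.lt_succ_self _)
    have hodd : Odd (frob S + 1) := Even.add_one hfe
    have := (hcoe _ h1 hodd).1
    simp only [Nat.add_sub_cancel] at this
    exact hfrob_gap this
  refine ⟨?_, hfodd⟩
  -- mult is a member
  have hMne : {x : ℕ | x ∈ S ∧ x ≠ 0}.Nonempty :=
    ⟨frob S + 1, habove _ (Nat.lt_succ_self _), Nat.succ_ne_zero _⟩
  have hmem : mult S ∈ {x : ℕ | x ∈ S ∧ x ≠ 0} := Nat.sInf_mem hMne
  obtain ⟨hmS, hm0⟩ := hmem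
  rw [Nat.not_odd_iff_even.symm]
  intro hmodd
  have hm1 : mult S - 1 ∈ S := (hcoe _ hmS hmodd).1
  by_cases h1 : mult S = 1
  · -- then 1 ∈ S and S = univ
    apply hne
    ext x
    simp only [Set.mem_univ, iff_true]
    induction x with
    | zero => exact h0
    | succ n ih => exact hadd n 1 ih (h1 ▸ hmS)
  · have hpos : 1 < mult S := lt_of_le_of_ne (Nat.one_le_iff_ne_zero.mpr hm0) (Ne.symm h1)
    have : mult S ≤ mult S - 1 :=
      Nat.sInf_le ⟨hm1, by omega⟩
    omega
end

section
/- A numerical semigroup S is a Coe-semigroup if and only if {x-1, x+1} ⊆ S for every odd element x of the minimal generating set of S. -/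
open Pointwise

theorem stmt_1 (S : Set ℕ) (hS : IsNumSgrp S) :
    IsCoe S ↔ ∀ x ∈ msg S, Odd x → x - 1 ∈ S ∧ x + 1 ∈ S := by
  constructor
  · intro hCoe x hx hodd
    exact hCoe.2 x hx.1.1 hodd
  · intro h
    refine ⟨hS, ?_⟩
    intro x hx hodd
    induction x using Nat.strong_induction_on with
    | _ x ih =>
      by_cases hmsg : x ∈ msg S
      · exact h x hmsg hodd
      · have hx0 : x ≠ 0 := by rintro rfl; exact (Nat.not_odd_iff_even.2 Even.zero) hodd
        have : ∃ a ∈ S \ {0}, ∃ b ∈ S \ {0}, x = a + b := by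
          by_contra hc
          exact hmsg ⟨⟨hx, hx0⟩, hc⟩
        obtain ⟨a, ⟨ha, ha0⟩, b, ⟨hb, hb0⟩, rfl⟩ := this
        have ha0' : a ≠ 0 := ha0
        have hb0' : b ≠ 0 := hb0
        -- one of a,b is odd
        rcases Nat.even_or_odd a with hae | hao
        · have hbo : Odd b := by
            rcases Nat.even_or_odd b with hbe | hbo
            · exact absurd (hae.add hbe) (Nat.not_even_iff_odd.2 hodd)
            · exact hbo
          have hlt : b < a + b := by omega
          have := ih b hlt hb hbo
          have hb1 : 1 ≤ b := Nat.one_le_iff_ne_zero.2 hb0'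
          constructor
          · have : a + (b - 1) ∈ S := hS.2.1 _ _ ha this.1
            have heq : a + b - 1 = a + (b - 1) := by omega
            rwa [heq]
          · have : a + (b + 1) ∈ S := hS.2.1 _ _ ha this.2
            have heq : a + b + 1 = a + (b + 1) := by omega
            rwa [heq]
        · have hlt : a < a + b := by omega
          have := ih a hlt ha hao
          have ha1 : 1 ≤ a := Nat.one_le_iff_ne_zero.2 ha0'
          constructor
          · have : (a - 1) + b ∈ S := hS.2.1 _ _ this.1 hb
            have heq : a + b - 1 = (a - 1) + b := by omega
            rwa [heq]
          · have : (a + 1) + b ∈ S := hS.2.1 _ _ this.2 hb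
            have heq : a + b + 1 = (a + 1) + b := by omega
            rwa [heq]
end

section
/- If S is a Coe-semigroup with S ≠ ℕ, then S ∪ {F(S)-1, F(S)} is a Coe-semigroup, where F(S) is the Frobenius number of S. -/
open Pointwise

theorem stmt_2 (S : Set ℕ) (hS : IsCoe S) (hne : S ≠ Set.univ) :
    IsCoe (S ∪ {frob S - 1, frob S}) := by
  obtain ⟨⟨h0, hadd, hfin⟩, hcoe⟩ := hS
  have hGne : {x : ℕ | x ∉ S}.Nonempty := by
    rw [Set.nonempty_iff_ne_empty]
    intro h
    apply hne
    ext x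
    simp only [Set.mem_univ, iff_true]
    by_contra hx
    exact (Set.eq_empty_iff_forall_notMem.mp h x) hx
  have hbdd : BddAbove {x : ℕ | x ∉ S} := hfin.bddAbove
  have hF : frob S ∉ S := Nat.sSup_mem hGne hbdd
  have hgt : ∀ n, frob S < n → n ∈ S := by
    intro n hn
    by_contra h
    exact absurd (le_csSup hbdd h) (not_le.mpr hn)
  have hFodd : Odd (frob S) := by
    rcases Nat.even_or_odd (frob S) with he | ho
    · exfalso
      have h1 : frob S + 1 ∈ S := hgt _ (lt_add_one _)
      have h2 := (hcoe _ h1 (Even.add_one he)).1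
      exact hF (by simpa using h2)
    · exact ho
  have hFpos : 0 < frob S := Nat.pos_of_ne_zero (by rintro h; rw [h] at hF; exact hF h0)
  have hT : ∀ n, frob S - 1 ≤ n → n ∈ S ∪ {frob S - 1, frob S} := by
    intro n hn
    rcases lt_trichotomy (frob S) n with h | h | h
    · exact Or.inl (hgt n h)
    · exact Or.inr (by right; exact h.symm)
    · have : n = frob S - 1 := by omega
      exact Or.inr (by left; exact this)
  refine ⟨⟨Or.inl h0, ?_, ?_⟩, ?_⟩
  · intro a b ha hb
    rcases ha with ha | ha
    · rcases hb with hb | hb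
      · exact Or.inl (hadd a b ha hb)
      · apply hT
        simp only [Set.mem_insert_iff, Set.mem_singleton_iff] at hb
        omega
    · apply hT
      simp only [Set.mem_insert_iff, Set.mem_singleton_iff] at ha
      omega
  · exact hfin.subset (fun x hx => by
      simp only [Set.mem_union, not_or, Set.mem_setOf_eq] at hx ⊢
      exact hx.1)
  · intro x hx hodd
    rcases hx with hx | hx
    · obtain ⟨h1, h2⟩ := hcoe x hx hodd
      exact ⟨Or.inl h1, Or.inl h2⟩
    · simp only [Set.mem_insert_iff, Set.mem_singleton_iff] at hx
      rcases hx with rfl | rfl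
      · exfalso
        obtain ⟨k, hk⟩ := hodd
        obtain ⟨m, hm⟩ := hFodd
        omega
      · exact ⟨Or.inr (by left; rfl), Or.inl (hgt _ (lt_add_one _))⟩
end

section
/- If S is a Coe-semigroup, then there exists a finite chain of Coe-semigroups S = S₀ ⊊ S₁ ⊊ ⋯ ⊊ S_k = ℕ, where for each i, the set difference S_{i+1} \ S_i has cardinality 1 or 2. -/
open Pointwise

lemma coe_step (S : Set ℕ) (hS : IsCoe S) (hne : S ≠ Set.univ) :
    ∃ T, IsCoe T ∧ S ⊂ T ∧ ((T \ S).ncard = 1 ∨ (T \ S).ncard = 2) ∧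
      genus T < genus S := by
  obtain ⟨⟨h0, hadd, hfin⟩, hcoe⟩ := hS
  set G : Set ℕ := {x : ℕ | x ∉ S} with hG
  have hGne : G.Nonempty := by
    rw [Set.nonempty_def]
    by_contra h
    push_neg at h
    apply hne
    ext x; simp only [Set.mem_univ, iff_true]
    by_contra hx
    exact h x hx
  have hbdd : BddAbove G := hfin.bddAbove
  set F := frob S with hF
  have hFmem : F ∉ S := Nat.sSup_mem hGne hbdd
  have hgt : ∀ x, F < x → x ∈ S := by
    intro x hx
    by_contra hxS
    exact absurd (le_csSup hbdd hxS) (not_le.mpr hx)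
  set m : ℕ := if Even F then F else F - 1 with hm
  have hFpos : 1 ≤ F := by
    rcases Nat.eq_zero_or_pos F with h | h
    · exact absurd (h ▸ hFmem) (by simpa using h0)
    · exact h
  have hmeven : Even m := by
    rcases Nat.even_or_odd F with h | h
    · simp [hm, h]
    · rw [hm, if_neg (by simpa using Nat.not_even_iff_odd.mpr h)]
      rcases h with ⟨t, ht⟩
      exact ⟨t, by omega⟩
  have hmF : m ≤ F ∧ F ≤ m + 1 := by
    rw [hm]; split <;> omega
  set T : Set ℕ := S ∪ Set.Ici m with hT
  have hST : S ⊆ T := Set.subset_union_left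
  have hFT : F ∈ T := Or.inr (by simp [hmF.1])
  have hTcoe : IsCoe T := by
    refine ⟨⟨Or.inl h0, ?_, ?_⟩, ?_⟩
    · rintro a b (ha | ha) (hb | hb)
      · exact Or.inl (hadd a b ha hb)
      · exact Or.inr (by simp only [Set.mem_Ici] at hb ⊢; omega)
      · exact Or.inr (by simp only [Set.mem_Ici] at ha ⊢; omega)
      · exact Or.inr (by simp only [Set.mem_Ici] at ha ⊢; omega)
    · exact hfin.subset (fun x hx => by simp only [Set.mem_setOf_eq, hT, Set.mem_union] at hx ⊢; tauto)
    · rintro x (hx | hx) hodd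
      · obtain ⟨h1, h2⟩ := hcoe x hx hodd
        exact ⟨Or.inl h1, Or.inl h2⟩
      · simp only [Set.mem_Ici] at hx
        have hxm : m < x := lt_of_le_of_ne hx (fun h => by
          exact (Nat.not_odd_iff_even.mpr (h ▸ hmeven)) hodd)
        exact ⟨Or.inr (by simp only [Set.mem_Ici]; omega),
               Or.inr (by simp only [Set.mem_Ici]; omega)⟩
  have hdiffsub : T \ S ⊆ {F - 1, F} := by
    rintro x ⟨hxT, hxS⟩
    rcases hxT with h | h
    · exact absurd h hxS
    · simp only [Set.mem_Ici] at h
      have : ¬ (F < x) := fun hc => hxS (hgt x hc)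
      simp only [Set.mem_insert_iff, Set.mem_singleton_iff]
      omega
  have hdiffne : F ∈ T \ S := ⟨hFT, hFmem⟩
  have hc1 : 1 ≤ (T \ S).ncard := by
    have : (T \ S).Nonempty := ⟨F, hdiffne⟩
    have hfin2 : (T \ S).Finite := (((Set.finite_singleton F).insert (F - 1))).subset hdiffsub
    exact (Set.ncard_pos hfin2).mpr this
  have hc2 : (T \ S).ncard ≤ 2 := by
    calc (T \ S).ncard ≤ ({F - 1, F} : Set ℕ).ncard :=
          Set.ncard_le_ncard hdiffsub (((Set.finite_singleton F).insert (F - 1)))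
      _ ≤ 2 := by
          have := Set.ncard_insert_le (F - 1) ({F} : Set ℕ)
          simpa using this
  refine ⟨T, hTcoe, ⟨hST, fun h => hFmem (h hFT)⟩, by omega, ?_⟩
  apply Set.ncard_lt_ncard
  · constructor
    · intro x hx
      simp only [Set.mem_setOf_eq] at hx ⊢
      exact fun hxS => hx (hST hxS)
    · intro h
      exact (h (show F ∈ G from hFmem)) hFT
  · exact hfin


theorem stmt_3 (S : Set ℕ) (hS : IsCoe S) :
    ∃ (k : ℕ) (c : ℕ → Set ℕ), c 0 = S ∧ c k = Set.univ ∧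
      (∀ i ≤ k, IsCoe (c i)) ∧
      (∀ i < k, c i ⊂ c (i + 1) ∧
        ((c (i + 1) \ c i).ncard = 1 ∨ (c (i + 1) \ c i).ncard = 2)) := by
  suffices h : ∀ n (S : Set ℕ), genus S = n → IsCoe S →
      ∃ (k : ℕ) (c : ℕ → Set ℕ), c 0 = S ∧ c k = Set.univ ∧
      (∀ i ≤ k, IsCoe (c i)) ∧
      (∀ i < k, c i ⊂ c (i + 1) ∧
        ((c (i + 1) \ c i).ncard = 1 ∨ (c (i + 1) \ c i).ncard = 2)) by
    exact h _ S rfl hS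
  intro n
  induction n using Nat.strong_induction_on with
  | _ n ih =>
    intro S hg hS
    by_cases hne : S = Set.univ
    · exact ⟨0, fun _ => S, rfl, hne, fun i _ => hS, fun i hi => absurd hi (by omega)⟩
    · obtain ⟨T, hTcoe, hsub, hcard, hlt⟩ := coe_step S hS hne
      obtain ⟨k, c', hc0, hck, hcoe', hchain'⟩ := ih (genus T) (hg ▸ hlt) T rfl hTcoe
      refine ⟨k + 1, fun i => if i = 0 then S else c' (i - 1), by simp, by simp [hck], ?_, ?_⟩
      · intro i hi
        rcases Nat.eq_zero_or_pos i with h | h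
        · simpa [h] using hS
        · simp only [if_neg (by omega : i ≠ 0)]
          exact hcoe' (i - 1) (by omega)
      · intro i hi
        rcases Nat.eq_zero_or_pos i with h | h
        · subst h
          simp only [zero_add]
          rw [if_pos trivial, if_neg one_ne_zero, hc0]
          exact ⟨hsub, hcard⟩
        · have h1 : i ≠ 0 := by omega
          have h2 : i + 1 ≠ 0 := by omega
          simp only [if_neg h1, if_neg h2]
          have : i + 1 - 1 = i - 1 + 1 := by omega
          rw [this]
          exact hchain' (i - 1) (by omega)
end

section
/- For a Coe-semigroup S, the number of odd natural numbers not in S equals the length k of the chain S = S₀ ⊊ S₁ ⊊ ⋯ ⊊ S_k = ℕ obtained by repeatedly adjoining {F(S_n)-1, F(S_n)}. -/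
open Pointwise

open Classical in
/-- The chain obtained from S by repeatedly adjoining {F(S)-1, F(S)}. -/
noncomputable def chainCoe (S : Set ℕ) : ℕ → Set ℕ
  | 0 => S
  | n + 1 =>
      if chainCoe S n = Set.univ then Set.univ
      else chainCoe S n ∪ {frob (chainCoe S n) - 1, frob (chainCoe S n)}

lemma frob_not_mem {S : Set ℕ} (hfin : {x : ℕ | x ∉ S}.Finite) (hne : S ≠ Set.univ) :
    frob S ∉ S := by
  have hnonempty : {x : ℕ | x ∉ S}.Nonempty := Set.nonempty_compl.mpr hne
  exact Nat.sSup_mem hnonempty hfin.bddAbove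

lemma mem_of_frob_lt {S : Set ℕ} (hfin : {x : ℕ | x ∉ S}.Finite) {x : ℕ}
    (hx : frob S < x) : x ∈ S := by
  by_contra h
  exact absurd (le_csSup hfin.bddAbove h) (not_le.mpr hx)

lemma frob_odd {S : Set ℕ} (hS : IsCoe S) (hne : S ≠ Set.univ) : Odd (frob S) := by
  by_contra h
  have h1 : frob S + 1 ∈ S := mem_of_frob_lt hS.1.2.2 (by omega)
  have hodd : Odd (frob S + 1) := by
    rcases Nat.even_or_odd (frob S) with he | ho
    · exact he.add_one
    · exact absurd ho h
  have := (hS.2 _ h1 hodd).1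
  simp only [Nat.add_sub_cancel] at this
  exact frob_not_mem hS.1.2.2 hne this

lemma step_coe {S : Set ℕ} (hS : IsCoe S) (hne : S ≠ Set.univ) :
    IsCoe (S ∪ {frob S - 1, frob S}) := by
  obtain ⟨⟨h0, hadd, hfin⟩, hcoe⟩ := hS
  have hF1 : 1 ≤ frob S := by
    rcases frob_odd ⟨⟨h0, hadd, hfin⟩, hcoe⟩ hne with ⟨m, hm⟩; omega
  have hgt : ∀ x, frob S < x → x ∈ S := fun x hx => mem_of_frob_lt hfin hx
  refine ⟨⟨Or.inl h0, ?_, hfin.subset (fun x hx hxS => hx (Or.inl hxS))⟩, ?_⟩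
  · rintro a b ha hb
    rcases Nat.eq_zero_or_pos a with rfl | hapos
    · simpa using hb
    rcases Nat.eq_zero_or_pos b with rfl | hbpos
    · simpa using ha
    have key : ∀ c d : ℕ, 0 < c → 0 < d → c ∈ S ∪ {frob S - 1, frob S} →
        d ∈ ({frob S - 1, frob S} : Set ℕ) → c + d ∈ S ∪ {frob S - 1, frob S} := by
      intro c d hc hd hcm hdm
      have hdge : frob S - 1 ≤ d := by
        simp only [Set.mem_insert_iff, Set.mem_singleton_iff] at hdm
        omega
      have : frob S ≤ c + d := by omega
      rcases eq_or_lt_of_le this with h | h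
      · right; right; exact h.symm
      · left; exact hgt _ h
    rcases ha with ha | ha
    · rcases hb with hb | hb
      · exact Or.inl (hadd a b ha hb)
      · exact key a b hapos hbpos (Or.inl ha) hb
    · rw [add_comm]
      exact key b a hbpos hapos hb ha
  · intro x hx hxodd
    have hFodd : Odd (frob S) := frob_odd ⟨⟨h0, hadd, hfin⟩, hcoe⟩ hne
    rcases hx with hx | hx
    · obtain ⟨h1, h2⟩ := hcoe x hx hxodd
      exact ⟨Or.inl h1, Or.inl h2⟩
    · simp only [Set.mem_insert_iff, Set.mem_singleton_iff] at hx
      rcases hx with hx | hx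
      · exfalso
        obtain ⟨m, hm⟩ := hxodd
        obtain ⟨m', hm'⟩ := hFodd
        omega
      · subst hx
        refine ⟨Or.inr (Or.inl rfl), Or.inl (hgt _ (by omega))⟩

lemma chain_shift (S : Set ℕ) (n : ℕ) :
    chainCoe S (n + 1) = chainCoe (chainCoe S 1) n := by
  induction n with
  | zero => rfl
  | succ n ih =>
    classical
    show (if chainCoe S (n+1) = Set.univ then Set.univ else _) = _
    rw [ih]; rfl

theorem stmt_4 (S : Set ℕ) (hS : IsCoe S) (k : ℕ)
    (hk : chainCoe S k = Set.univ) (hmin : ∀ i < k, chainCoe S i ≠ Set.univ) :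
    {x : ℕ | Odd x ∧ x ∉ S}.ncard = k := by
  induction k generalizing S with
  | zero =>
    have : S = Set.univ := hk
    simp [this]
  | succ k ih =>
    have hne : S ≠ Set.univ := hmin 0 (by omega)
    set S' := S ∪ {frob S - 1, frob S} with hS'
    have hchain1 : chainCoe S 1 = S' := by
      classical
      show (if S = Set.univ then Set.univ else _) = _
      rw [if_neg hne]; rfl
    have hcoe' : IsCoe S' := step_coe hS hne
    have hk' : chainCoe S' k = Set.univ := by
      rw [← hchain1, ← chain_shift]; exact hk
    have hmin' : ∀ i < k, chainCoe S' i ≠ Set.univ := by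
      intro i hi
      rw [← hchain1, ← chain_shift]
      exact hmin (i + 1) (by omega)
    have hrec := ih S' hcoe' hk' hmin'
    have hFodd : Odd (frob S) := frob_odd hS hne
    have hFnot : frob S ∉ S := frob_not_mem hS.1.2.2 hne
    have hsetEq : {x : ℕ | Odd x ∧ x ∉ S} = insert (frob S) {x : ℕ | Odd x ∧ x ∉ S'} := by
      ext x
      simp only [Set.mem_setOf_eq, Set.mem_insert_iff, hS', Set.mem_union,
        Set.mem_insert_iff, Set.mem_singleton_iff]
      constructor
      · rintro ⟨hxo, hxS⟩
        by_cases hxF : x = frob S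
        · exact Or.inl hxF
        · right
          refine ⟨hxo, ?_⟩
          push_neg
          refine ⟨hxS, ?_, hxF⟩
          obtain ⟨m, hm⟩ := hxo
          obtain ⟨m', hm'⟩ := hFodd
          omega
      · rintro (rfl | ⟨hxo, hxS⟩)
        · exact ⟨hFodd, hFnot⟩
        · push_neg at hxS
          exact ⟨hxo, hxS.1⟩
    have hfin' : {x : ℕ | Odd x ∧ x ∉ S'}.Finite :=
      hcoe'.1.2.2.subset (fun x hx => hx.2)
    have hFnotmem : frob S ∉ {x : ℕ | Odd x ∧ x ∉ S'} := by
      simp only [Set.mem_setOf_eq, not_and, not_not]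
      intro _
      exact Or.inr (Or.inr rfl)
    rw [hsetEq, Set.ncard_insert_of_notMem hFnotmem hfin', hrec]
end

section
/- If S is a Coe-semigroup and x is an odd minimal generator of S with x > F(S), then S \ {x} is a Coe-semigroup with Frobenius number x, and (S \ {x}) ∪ {x-1, x} = S. -/
open Pointwise

theorem stmt_5 (S : Set ℕ) (hS : IsCoe S) (x : ℕ) (hx : x ∈ msg S)
    (hodd : Odd x) (hgt : frob S < x) :
    IsCoe (S \ {x}) ∧ frob (S \ {x}) = x ∧ (S \ {x}) ∪ {x - 1, x} = S := by
  obtain ⟨⟨h0, hadd, hfin⟩, hcoe⟩ := hS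
  obtain ⟨⟨hxS, hx0⟩, hxnot⟩ := hx
  simp only [Set.mem_singleton_iff] at hx0
  obtain ⟨k, hk⟩ := hodd
  have hxm1 : x - 1 ∈ S := (hcoe x hxS ⟨k, hk⟩).1
  have hbd : BddAbove {n : ℕ | n ∉ S} := hfin.bddAbove
  have hgap_lt : ∀ n, n ∉ S → n < x := fun n hn =>
    lt_of_le_of_lt (le_csSup hbd hn) hgt
  have hS'gaps : {n : ℕ | n ∉ S \ {x}} = {n : ℕ | n ∉ S} ∪ {x} := by
    ext n
    by_cases hn : n = x <;> simp [Set.mem_diff, hn, hxS] <;> tauto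
  have hfin' : ({n : ℕ | n ∉ S \ {x}}).Finite := by
    rw [hS'gaps]; exact hfin.union (Set.finite_singleton x)
  refine ⟨⟨⟨⟨h0, by simp; omega⟩, ?_, hfin'⟩, ?_⟩, ?_, ?_⟩
  · rintro a b ⟨ha, ha'⟩ ⟨hb, hb'⟩
    simp only [Set.mem_singleton_iff] at ha' hb' ⊢
    refine ⟨hadd a b ha hb, fun hab => ?_⟩
    rw [Set.mem_singleton_iff] at hab
    rcases Nat.eq_zero_or_pos a with rfl | ha0
    · exact hb' (by omega)
    rcases Nat.eq_zero_or_pos b with rfl | hb0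
    · exact ha' (by omega)
    exact hxnot ⟨a, ⟨ha, by simp; omega⟩, b, ⟨hb, by simp; omega⟩, hab.symm⟩
  · rintro y ⟨hyS, hyx⟩ hyodd
    obtain ⟨m, hm⟩ := hyodd
    obtain ⟨h1, h2⟩ := hcoe y hyS ⟨m, hm⟩
    exact ⟨⟨h1, by simp; omega⟩, ⟨h2, by simp; omega⟩⟩
  · show sSup _ = x
    rw [hS'gaps]
    apply le_antisymm
    · apply csSup_le ⟨x, Or.inr rfl⟩
      rintro n (hn | rfl)
      · exact (hgap_lt n hn).le
      · exact le_rfl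
    · exact le_csSup (hfin.union (Set.finite_singleton x)).bddAbove (Or.inr rfl)
  · ext n
    constructor
    · rintro (⟨h, _⟩ | h)
      · exact h
      · rcases h with rfl | rfl
        · exact hxm1
        · exact hxS
    · intro hn
      by_cases hnx : n = x
      · exact Or.inr (by simp [hnx])
      · exact Or.inl ⟨hn, hnx⟩
end

section
/- If S is a Coe-semigroup such that both F(S)+1 and F(S)+2 are minimal generators of S, then S \ {F(S)+1, F(S)+2} is a Coe-semigroup with Frobenius number F(S)+2. -/
open Pointwise

theorem stmt_6 (S : Set ℕ) (hS : IsCoe S)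
    (h1 : frob S + 1 ∈ msg S) (h2 : frob S + 2 ∈ msg S) :
    IsCoe (S \ {frob S + 1, frob S + 2}) ∧
      frob (S \ {frob S + 1, frob S + 2}) = frob S + 2 := by
  obtain ⟨⟨h0, hadd, hfin⟩, hcoe⟩ := hS
  set F := frob S with hFdef
  have hF1S : F + 1 ∈ S := h1.1.1
  have hF2S : F + 2 ∈ S := h2.1.1
  -- the gap set is nonempty
  have hne : {x : ℕ | x ∉ S}.Nonempty := by
    by_contra h
    have hall : ∀ x : ℕ, x ∈ S := by
      intro x; by_contra hx; exact h ⟨x, hx⟩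
    have hFz : F = 0 := by
      have he : {x : ℕ | x ∉ S} = ∅ :=
        Set.eq_empty_iff_forall_notMem.2 (fun x hx => hx (hall x))
      rw [hFdef, frob, he, csSup_empty]; rfl
    apply h2.2
    refine ⟨1, ⟨hall 1, by simp⟩, 1, ⟨hall 1, by simp⟩, by omega⟩
  have hFgap : F ∉ S := Set.Nonempty.csSup_mem hne hfin
  have hub : ∀ y : ℕ, y ∉ S → y ≤ F := fun y hy => le_csSup hfin.bddAbove hy
  -- F is odd
  have hFodd : Odd F := by
    rcases Nat.even_or_odd F with he | ho
    · exfalso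
      have hodd : Odd (F + 1) := Even.add_one he
      have := (hcoe (F + 1) hF1S hodd).1
      simp only [Nat.add_sub_cancel] at this
      exact hFgap this
    · exact ho
  constructor
  · constructor
    · refine ⟨⟨h0, ?_⟩, ?_, ?_⟩
      · simp only [Set.mem_insert_iff, Set.mem_singleton_iff]; omega
      · rintro a b ⟨haS, haN⟩ ⟨hbS, hbN⟩
        refine ⟨hadd _ _ haS hbS, ?_⟩
        simp only [Set.mem_insert_iff, Set.mem_singleton_iff] at haN hbN ⊢
        push_neg at haN hbN
        rintro (hab | hab)
        · by_cases ha0 : a = 0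
          · omega
          · by_cases hb0 : b = 0
            · omega
            · exact h1.2 ⟨a, ⟨haS, ha0⟩, b, ⟨hbS, hb0⟩, hab.symm⟩
        · by_cases ha0 : a = 0
          · omega
          · by_cases hb0 : b = 0
            · omega
            · exact h2.2 ⟨a, ⟨haS, ha0⟩, b, ⟨hbS, hb0⟩, hab.symm⟩
      · apply Set.Finite.subset (hfin.union (Set.finite_singleton (F+1) |>.union (Set.finite_singleton (F+2))))
        intro x hx
        simp only [Set.mem_setOf_eq, Set.mem_diff, Set.mem_insert_iff,
          Set.mem_singleton_iff, not_and, not_not] at hx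
        by_cases hxS : x ∈ S
        · right; have := hx hxS; simp only [Set.union_singleton, Set.mem_insert_iff, Set.mem_singleton_iff]; tauto
        · left; exact hxS
    · rintro x ⟨hxS, hxN⟩ hodd
      obtain ⟨hx1, hx2⟩ := hcoe x hxS hodd
      simp only [Set.mem_insert_iff, Set.mem_singleton_iff] at hxN
      push_neg at hxN
      obtain ⟨k, hk⟩ := hodd
      obtain ⟨m, hm⟩ := hFodd
      refine ⟨⟨hx1, ?_⟩, ⟨hx2, ?_⟩⟩
      · simp only [Set.mem_insert_iff, Set.mem_singleton_iff]
        omega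
      · simp only [Set.mem_insert_iff, Set.mem_singleton_iff]
        rintro (h | h)
        · have hxF : x = F := by omega
          exact hFgap (hxF ▸ hxS)
        · omega
  · have h2mem : F + 2 ∈ {x : ℕ | x ∉ S \ {F + 1, F + 2}} := by
      intro h; exact h.2 (by simp)
    apply le_antisymm
    · apply csSup_le ⟨F + 2, h2mem⟩
      intro y hy
      simp only [Set.mem_setOf_eq, Set.mem_diff, Set.mem_insert_iff,
        Set.mem_singleton_iff, not_and, not_not] at hy
      by_cases hyS : y ∈ S
      · rcases hy hyS with h | h <;> omega
      · have := hub y hyS; omega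
    · have hfinT : {x : ℕ | x ∉ S \ {F + 1, F + 2}}.Finite := by
        apply Set.Finite.subset (hfin.union (Set.finite_singleton (F+1) |>.union (Set.finite_singleton (F+2))))
        intro x hx
        simp only [Set.mem_setOf_eq, Set.mem_diff, Set.mem_insert_iff,
          Set.mem_singleton_iff, not_and, not_not] at hx
        by_cases hxS : x ∈ S
        · right; have := hx hxS; simp only [Set.union_singleton, Set.mem_insert_iff, Set.mem_singleton_iff]; tauto
        · left; exact hxS
      exact le_csSup hfinT.bddAbove h2mem
end

section
/- Let S be a numerical semigroup with S ≠ ℕ and x, x+1 ∈ S. Then S \ {x, x+1} is a numerical semigroup if and only if both x and x+1 are minimal generators of S. -/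
open Pointwise

theorem stmt_7 (S : Set ℕ) (hS : IsNumSgrp S) (hne : S ≠ Set.univ)
    (x : ℕ) (hx : x ∈ S) (hx1 : x + 1 ∈ S) :
    IsNumSgrp (S \ {x, x + 1}) ↔ x ∈ msg S ∧ x + 1 ∈ msg S := by
  obtain ⟨h0, hadd, hfin⟩ := hS
  have hone : 1 ∉ S := by
    intro h1
    apply hne
    ext n
    simp only [Set.mem_univ, iff_true]
    induction n with
    | zero => exact h0
    | succ k ih => exact hadd k 1 ih h1
  have hx0 : x ≠ 0 := by rintro rfl; exact hone hx1
  constructor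
  · rintro ⟨t0, tadd, tfin⟩
    constructor
    · refine ⟨⟨hx, hx0⟩, ?_⟩
      rintro ⟨a, ⟨ha, ha0⟩, b, ⟨hb, hb0⟩, hab⟩
      simp only [Set.mem_singleton_iff] at ha0 hb0
      have haT : a ∈ S \ {x, x + 1} := ⟨ha, by
        simp only [Set.mem_insert_iff, Set.mem_singleton_iff]; omega⟩
      have hbT : b ∈ S \ {x, x + 1} := ⟨hb, by
        simp only [Set.mem_insert_iff, Set.mem_singleton_iff]; omega⟩
      have := (tadd a b haT hbT).2
      simp only [Set.mem_insert_iff, Set.mem_singleton_iff] at this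
      omega
    · refine ⟨⟨hx1, by simp⟩, ?_⟩
      rintro ⟨a, ⟨ha, ha0⟩, b, ⟨hb, hb0⟩, hab⟩
      simp only [Set.mem_singleton_iff] at ha0 hb0
      have ha1 : a ≠ 1 := fun h => hone (h ▸ ha)
      have hb1 : b ≠ 1 := fun h => hone (h ▸ hb)
      have haT : a ∈ S \ {x, x + 1} := ⟨ha, by
        simp only [Set.mem_insert_iff, Set.mem_singleton_iff]; omega⟩
      have hbT : b ∈ S \ {x, x + 1} := ⟨hb, by
        simp only [Set.mem_insert_iff, Set.mem_singleton_iff]; omega⟩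
      have := (tadd a b haT hbT).2
      simp only [Set.mem_insert_iff, Set.mem_singleton_iff] at this
      omega
  · rintro ⟨⟨⟨_, _⟩, hmx⟩, ⟨⟨_, _⟩, hmx1⟩⟩
    refine ⟨⟨h0, by simp only [Set.mem_insert_iff, Set.mem_singleton_iff]; omega⟩,
      ?_, ?_⟩
    · rintro a b ⟨ha, haN⟩ ⟨hb, hbN⟩
      simp only [Set.mem_insert_iff, Set.mem_singleton_iff] at haN hbN
      refine ⟨hadd a b ha hb, ?_⟩
      simp only [Set.mem_insert_iff, Set.mem_singleton_iff]
      push_neg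
      constructor
      · intro h
        rcases Nat.eq_zero_or_pos a with rfl | ha0
        · omega
        rcases Nat.eq_zero_or_pos b with rfl | hb0
        · omega
        exact hmx ⟨a, ⟨ha, by simpa using ha0.ne'⟩, b, ⟨hb, by simpa using hb0.ne'⟩, h.symm⟩
      · intro h
        rcases Nat.eq_zero_or_pos a with rfl | ha0
        · omega
        rcases Nat.eq_zero_or_pos b with rfl | hb0
        · omega
        exact hmx1 ⟨a, ⟨ha, by simpa using ha0.ne'⟩, b, ⟨hb, by simpa using hb0.ne'⟩, h.symm⟩
    · apply Set.Finite.subset (hfin.union (Set.toFinite {x, x + 1}))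
      intro n hn
      simp only [Set.mem_setOf_eq, Set.mem_diff, not_and, not_not] at hn
      by_cases hnS : n ∈ S
      · exact Or.inr (hn hnS)
      · exact Or.inl hnS
end

section
/- For every even positive integer k, the set of Coe-semigroups containing k is infinite. -/
open Pointwise

theorem stmt_9 (k : ℕ) (hk : Even k) (hpos : 0 < k) :
    {S : Set ℕ | IsCoe S ∧ k ∈ S}.Infinite := by
  obtain ⟨r, hr⟩ := hk
  set f : ℕ → Set ℕ := fun n =>
    {x : ℕ | x = 0 ∨ (x % 2 = 0 ∧ k ≤ x) ∨ k + 2 * n + 2 ≤ x} with hf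
  apply Set.infinite_of_injective_forall_mem (f := f)
  · intro n m hnm
    by_contra hne
    wlog h : n < m generalizing n m
    · exact this hnm.symm (Ne.symm hne) (by omega)
    have h1 : k + 2 * n + 3 ∈ f n := by
      simp only [hf, Set.mem_setOf_eq]; omega
    have h2 : k + 2 * n + 3 ∉ f m := by
      simp only [hf, Set.mem_setOf_eq]; omega
    rw [hnm] at h1; exact h2 h1
  · intro n
    refine ⟨⟨⟨?_, ?_, ?_⟩, ?_⟩, ?_⟩
    · simp [hf]
    · intro a b ha hb
      simp only [hf, Set.mem_setOf_eq] at ha hb ⊢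
      omega
    · apply Set.Finite.subset (Set.finite_Iio (k + 2 * n + 2))
      intro x hx
      simp only [hf, Set.mem_setOf_eq] at hx
      simp only [Set.mem_Iio]
      omega
    · intro x hx hodd
      rw [Nat.odd_iff] at hodd
      simp only [hf, Set.mem_setOf_eq] at hx ⊢
      omega
    · simp only [hf, Set.mem_setOf_eq]; omega
end

section
/- Let M be a submonoid of (ℕ,+) with M ≠ {0}. Then M can be expressed as an intersection of (possibly infinitely many) Coe-semigroups if and only if {x-1, x+1} ⊆ M for every odd element x of M. -/
open Pointwise

/-- A Coe-monoid: a submonoid of ℕ expressible as an intersection of Coe-semigroups. -/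
def IsCoeMonoid (M : Set ℕ) : Prop :=
  ∃ 𝒜 : Set (Set ℕ), 𝒜.Nonempty ∧ (∀ T ∈ 𝒜, IsCoe T) ∧ M = ⋂₀ 𝒜

/-- The smallest Coe-monoid containing X. -/
def coeClosure (X : Set ℕ) : Set ℕ := ⋂₀ {M : Set ℕ | IsCoeMonoid M ∧ X ⊆ M}

theorem stmt_11 (M : Set ℕ) (h0 : 0 ∈ M)
    (hadd : ∀ a b, a ∈ M → b ∈ M → a + b ∈ M) (hne : M ≠ {0}) :
    IsCoeMonoid M ↔ ∀ x ∈ M, Odd x → x - 1 ∈ M ∧ x + 1 ∈ M := by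
  constructor
  · rintro ⟨𝒜, -, hCoe, rfl⟩ x hx hodd
    constructor
    · exact Set.mem_sInter.2 fun T hT =>
        ((hCoe T hT).2 x (Set.mem_sInter.1 hx T hT) hodd).1
    · exact Set.mem_sInter.2 fun T hT =>
        ((hCoe T hT).2 x (Set.mem_sInter.1 hx T hT) hodd).2
  · intro hodd
    refine ⟨Set.range (fun k : ℕ => M ∪ Set.Ici (2 * k)), ⟨_, ⟨0, rfl⟩⟩, ?_, ?_⟩
    · rintro T ⟨k, rfl⟩
      refine ⟨⟨Or.inl h0, ?_, ?_⟩, ?_⟩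
      · rintro a b (ha | ha) (hb | hb)
        · exact Or.inl (hadd a b ha hb)
        · exact Or.inr (by simp only [Set.mem_Ici] at *; omega)
        · exact Or.inr (by simp only [Set.mem_Ici] at *; omega)
        · exact Or.inr (by simp only [Set.mem_Ici] at *; omega)
      · apply Set.Finite.subset (Set.finite_Iio (2 * k))
        intro x hx
        simp only [Set.mem_setOf_eq, Set.mem_union, Set.mem_Ici, not_or, not_le] at hx
        exact hx.2
      · rintro x (hx | hx) ⟨m, hm⟩
        · exact ⟨Or.inl (hodd x hx ⟨m, hm⟩).1, Or.inl (hodd x hx ⟨m, hm⟩).2⟩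
        · simp only [Set.mem_Ici] at hx
          exact ⟨Or.inr (by simp only [Set.mem_Ici]; omega),
                 Or.inr (by simp only [Set.mem_Ici]; omega)⟩
    · ext n
      simp only [Set.mem_sInter, Set.mem_range, forall_exists_index]
      constructor
      · exact fun hn T k hk => hk ▸ Or.inl hn
      · intro h
        rcases h (M ∪ Set.Ici (2 * (n + 1))) (n + 1) rfl with hn | hn
        · exact hn
        · simp only [Set.mem_Ici] at hn; omega
end

section
/- A submonoid M of (ℕ,+) is an intersection of Coe-semigroups if and only if either M consists only of even numbers, or M is itself a Coe-semigroup. -/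
open Pointwise

lemma aux_mul_mem {M : Set ℕ} (h0 : 0 ∈ M)
    (hadd : ∀ a b, a ∈ M → b ∈ M → a + b ∈ M)
    {k : ℕ} (hk : k ∈ M) : ∀ a, a * k ∈ M := by
  intro a
  induction a with
  | zero => simpa using h0
  | succ n ih => have := hadd _ _ ih hk; simpa [Nat.succ_mul] using this

theorem stmt_12 (M : Set ℕ) (h0 : 0 ∈ M)
    (hadd : ∀ a b, a ∈ M → b ∈ M → a + b ∈ M) :
    IsCoeMonoid M ↔ ((∀ x ∈ M, Even x) ∨ IsCoe M) := by
  constructor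
  · rintro ⟨𝒜, hne, hcoe, hM⟩
    by_cases hev : ∀ x ∈ M, Even x
    · exact Or.inl hev
    right
    push_neg at hev
    obtain ⟨m, hm, hmodd⟩ := hev
    rw [Nat.not_even_iff_odd] at hmodd
    have hC : ∀ x ∈ M, Odd x → x - 1 ∈ M ∧ x + 1 ∈ M := by
      intro x hx hodd
      constructor <;>
      · rw [hM, Set.mem_sInter]
        intro T hT
        have hxT : x ∈ T := by rw [hM, Set.mem_sInter] at hx; exact hx T hT
        have := (hcoe T hT).2 x hxT hodd
        tauto
    refine ⟨⟨h0, hadd, ?_⟩, hC⟩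
    rcases eq_or_ne m 1 with rfl | hm1
    · have : ∀ n : ℕ, n ∈ M := fun n => by
        simpa using aux_mul_mem h0 hadd hm n
      have : {x : ℕ | x ∉ M} = ∅ := by ext x; simp [this x]
      rw [this]; exact Set.finite_empty
    · have hm3 : 3 ≤ m := by
        obtain ⟨c, hc⟩ := hmodd; omega
      set k := m - 1 with hk
      have hkM : k ∈ M := (hC m hm hmodd).1
      have hk2 : 2 ≤ k := by omega
      have hk1M : k + 1 ∈ M := by
        have : k + 1 = m := by omega
        rw [this]; exact hm
      apply Set.Finite.subset (Set.finite_Iio (k*k))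
      intro x hx
      by_contra hxk
      simp only [Set.mem_Iio, not_lt] at hxk
      apply hx
      set q := x / k with hq
      set r := x % k with hr
      have hdm : k * q + r = x := Nat.div_add_mod x k
      have hrk : r < k := Nat.mod_lt x (by omega)
      have hqk : k ≤ q := by
        rw [hq, Nat.le_div_iff_mul_le (by omega)]
        nlinarith
      have hxeq : (q - r) * k + r * (k + 1) = x := by
        have h1 : q - r + r = q := by omega
        calc (q - r) * k + r * (k + 1) = ((q - r) + r) * k + r := by ring
          _ = q * k + r := by rw [h1]
          _ = x := by rw [Nat.mul_comm] at hdm; omega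
      rw [← hxeq]
      exact hadd _ _ (aux_mul_mem h0 hadd hkM _) (aux_mul_mem h0 hadd hk1M _)
  · rintro (hev | hcoe)
    · refine ⟨(fun n => M ∪ {x | 2*n+2 ≤ x}) '' {n | n ∉ M}, ?_, ?_, ?_⟩
      · refine ⟨_, ⟨1, ?_, rfl⟩⟩
        intro h1
        have := hev 1 h1
        simpa using this
      · rintro T ⟨n, hn, rfl⟩
        refine ⟨⟨Or.inl h0, ?_, ?_⟩, ?_⟩
        · rintro a b (ha | ha) (hb | hb)
          · exact Or.inl (hadd a b ha hb)
          · right; simp only [Set.mem_setOf_eq] at hb ⊢; omega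
          · right; simp only [Set.mem_setOf_eq] at ha ⊢; omega
          · right; simp only [Set.mem_setOf_eq] at ha ⊢; omega
        · apply Set.Finite.subset (Set.finite_Iio (2*n+2))
          intro x hx
          simp only [Set.mem_union, Set.mem_setOf_eq, not_or, not_le] at hx
          exact hx.2
        · rintro x (hx | hx) hodd
          · exact absurd (hev x hx) (Nat.not_even_iff_odd.mpr hodd)
          · simp only [Set.mem_setOf_eq] at hx
            obtain ⟨c, hc⟩ := hodd
            constructor <;> (right; simp only [Set.mem_setOf_eq]; omega)
      · ext x
        simp only [Set.mem_sInter, Set.mem_image, Set.mem_setOf_eq]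
        constructor
        · rintro hx T ⟨n, hn, rfl⟩
          exact Or.inl hx
        · intro hx
          by_contra hxM
          have := hx _ ⟨x, hxM, rfl⟩
          rcases this with h | h
          · exact hxM h
          · simp only [Set.mem_setOf_eq] at h; omega
    · exact ⟨{M}, ⟨M, rfl⟩, by simpa using hcoe, by simp⟩
end

section
/- For a subset X of ℕ \ {0}, the smallest Coe-monoid containing X equals the submonoid of ℕ generated by X ∪ {x+1 : x ∈ X odd} ∪ {x-1 : x ∈ X odd}. -/
open Pointwise

/-!
Closing the generators `X` under `x ↦ x ± 1` for odd `x ∈ X` already gives a submonoid `M` in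
which every odd element has both neighbours: an odd sum has an odd summand, whose neighbours can
be added to the other summand. Such an `M` is a Coe-monoid, being the intersection of the
Coe-semigroups `M ∪ [2n, ∞)`; the even threshold `2n` keeps the neighbours of an odd element
above it. Conversely every Coe-monoid containing `X` is a submonoid containing these generators.
-/

def OddNeighborClosed (S : Set ℕ) : Prop :=
  ∀ x ∈ S, Odd x → x - 1 ∈ S ∧ x + 1 ∈ S

def coeGenerators (X : Set ℕ) : Set ℕ :=
  X ∪ {y | ∃ x ∈ X, Odd x ∧ y = x + 1} ∪ {y | ∃ x ∈ X, Odd x ∧ y = x - 1}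

theorem OddNeighborClosed.sInter {𝒜 : Set (Set ℕ)} (h𝒜 : ∀ T ∈ 𝒜, OddNeighborClosed T) :
    OddNeighborClosed (⋂₀ 𝒜) := fun x hx hodd =>
  ⟨fun T hT => (h𝒜 T hT x (hx T hT) hodd).1, fun T hT => (h𝒜 T hT x (hx T hT) hodd).2⟩

theorem oddNeighborClosed_closure {G : Set ℕ}
    (hG : ∀ g ∈ G, Odd g → g - 1 ∈ AddSubmonoid.closure G ∧ g + 1 ∈ AddSubmonoid.closure G) :
    OddNeighborClosed (AddSubmonoid.closure G) := by
  set M := AddSubmonoid.closure G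
  have odd_add {a b : ℕ} (ha : a ∈ M) (hb : b ∈ M) (hao : Odd a)
      (iha : a - 1 ∈ M ∧ a + 1 ∈ M) : a + b - 1 ∈ M ∧ a + b + 1 ∈ M := by
    have ha₁ : 1 ≤ a := hao.pos
    refine ⟨?_, ?_⟩
    · rw [show a + b - 1 = (a - 1) + b by omega]
      exact add_mem iha.1 hb
    · rw [show a + b + 1 = (a + 1) + b by omega]
      exact add_mem iha.2 hb
  intro x hx
  induction hx using AddSubmonoid.closure_induction with
  | mem g hg => exact hG g hg
  | zero => exact fun h => absurd h Nat.not_odd_zero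
  | add a b ha hb iha ihb =>
    intro hodd
    rcases Nat.even_or_odd a with hae | hao
    · have hbo : Odd b := (Nat.odd_add'.mp hodd).mpr hae
      rw [add_comm]
      exact odd_add hb ha hbo (ihb hbo)
    · exact odd_add ha hb hao (iha hao)

theorem oddNeighborClosed_closure_coeGenerators (X : Set ℕ) :
    OddNeighborClosed (AddSubmonoid.closure (coeGenerators X)) := by
  refine oddNeighborClosed_closure ?_
  rintro g ((hg | ⟨x, -, ⟨k, rfl⟩, rfl⟩) | ⟨x, -, ⟨k, rfl⟩, rfl⟩) ⟨j, hj⟩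
  · exact ⟨AddSubmonoid.subset_closure (Or.inr ⟨g, hg, ⟨j, hj⟩, rfl⟩),
      AddSubmonoid.subset_closure (Or.inl (Or.inr ⟨g, hg, ⟨j, hj⟩, rfl⟩))⟩
  -- the added generators `x ± 1` are even
  all_goals omega

theorem coeGenerators_subset {X M : Set ℕ} (hM : OddNeighborClosed M) (hXM : X ⊆ M) :
    coeGenerators X ⊆ M := by
  rintro g ((hg | ⟨x, hx, hodd, rfl⟩) | ⟨x, hx, hodd, rfl⟩)
  · exact hXM hg
  · exact (hM x (hXM hx) hodd).2
  · exact (hM x (hXM hx) hodd).1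

theorem isCoe_union_Ici {M : AddSubmonoid ℕ} (hM : OddNeighborClosed M) (n : ℕ) :
    IsCoe ((M : Set ℕ) ∪ Set.Ici (2 * n)) := by
  refine ⟨⟨Or.inl M.zero_mem, ?_, ?_⟩, ?_⟩
  · rintro a b (ha | ha) (hb | hb)
    · exact Or.inl (M.add_mem ha hb)
    all_goals
      simp only [Set.mem_Ici] at ha hb
      exact Or.inr (Set.mem_Ici.mpr (by omega))
  · refine (Set.finite_Iio (2 * n)).subset fun x hx => ?_
    simp only [Set.mem_ofPred_eq, Set.mem_union, Set.mem_Ici, not_or, not_le] at hx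
    exact hx.2
  · rintro x (hx | hx) hodd
    · exact ⟨Or.inl (hM x hx hodd).1, Or.inl (hM x hx hodd).2⟩
    · have hx' : 2 * n < x := lt_of_le_of_ne hx fun h => by
        rw [← h] at hodd
        exact Nat.not_odd_iff_even.mpr (even_two_mul n) hodd
      simp only [Set.mem_union, Set.mem_Ici]
      omega

theorem isCoeMonoid_of_oddNeighborClosed {M : AddSubmonoid ℕ} (hM : OddNeighborClosed M) :
    IsCoeMonoid M := by
  refine ⟨Set.range fun n => (M : Set ℕ) ∪ Set.Ici (2 * n), Set.range_nonempty _,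
    Set.forall_mem_range.mpr (isCoe_union_Ici hM), ?_⟩
  ext x
  simp only [Set.sInter_range, Set.mem_iInter, Set.mem_union, Set.mem_Ici]
  exact ⟨fun hx _ => Or.inl hx, fun h => (h (x + 1)).resolve_right (by omega)⟩

theorem IsCoeMonoid.oddNeighborClosed {M : Set ℕ} (hM : IsCoeMonoid M) : OddNeighborClosed M := by
  obtain ⟨𝒜, -, h𝒜, rfl⟩ := hM
  exact OddNeighborClosed.sInter fun T hT => (h𝒜 T hT).2

def IsCoeMonoid.toAddSubmonoid {M : Set ℕ} (hM : IsCoeMonoid M) : AddSubmonoid ℕ where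
  carrier := M
  zero_mem' := by
    obtain ⟨𝒜, -, h𝒜, rfl⟩ := hM
    exact fun T hT => (h𝒜 T hT).1.1
  add_mem' := by
    obtain ⟨𝒜, -, h𝒜, rfl⟩ := hM
    exact fun ha hb T hT => (h𝒜 T hT).1.2.1 _ _ (ha T hT) (hb T hT)

theorem stmt_13_general (X : Set ℕ) :
    coeClosure X =
      ↑(AddSubmonoid.closure
        (X ∪ {y | ∃ x ∈ X, Odd x ∧ y = x + 1} ∪ {y | ∃ x ∈ X, Odd x ∧ y = x - 1})) := by
  change coeClosure X = AddSubmonoid.closure (coeGenerators X)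
  apply Set.Subset.antisymm
  · refine Set.sInter_subset_of_mem
      ⟨isCoeMonoid_of_oddNeighborClosed (oddNeighborClosed_closure_coeGenerators X), ?_⟩
    exact fun x hx => AddSubmonoid.subset_closure (Or.inl (Or.inl hx))
  · rintro m hm M ⟨hM, hXM⟩
    exact (AddSubmonoid.closure_le (S := hM.toAddSubmonoid)).mpr
      (coeGenerators_subset hM.oddNeighborClosed hXM) hm

theorem stmt_13 (X : Set ℕ) (hX : 0 ∉ X) :
    coeClosure X =
      ↑(AddSubmonoid.closure
        (X ∪ {y | ∃ x ∈ X, Odd x ∧ y = x + 1} ∪ {y | ∃ x ∈ X, Odd x ∧ y = x - 1})) :=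
  stmt_13_general X
end

section
/- For a subset X of ℕ \ {0}, the smallest Coe-monoid Coe(X) containing X is a Coe-semigroup (i.e., has finite complement in ℕ) if and only if X contains at least one odd element. -/
open Pointwise

lemma mem_coeClosure_iff {X : Set ℕ} {y : ℕ} :
    y ∈ coeClosure X ↔ ∀ S, IsCoe S → X ⊆ S → y ∈ S := by
  constructor
  · intro h S hS hXS
    rw [coeClosure, Set.mem_sInter] at h
    exact h S ⟨⟨{S}, Set.singleton_nonempty S,
      fun T hT => by rw [Set.mem_singleton_iff] at hT; rwa [hT],
      (Set.sInter_singleton S).symm⟩, hXS⟩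
  · intro h
    rw [coeClosure, Set.mem_sInter]
    rintro M ⟨⟨𝒜, h𝒜ne, h𝒜coe, rfl⟩, hXM⟩
    rw [Set.mem_sInter]
    intro T hT
    exact h T (h𝒜coe T hT) (hXM.trans (Set.sInter_subset_of_mem hT))

lemma mul_mem_of_mem {S : Set ℕ} (h0 : 0 ∈ S)
    (hadd : ∀ a b, a ∈ S → b ∈ S → a + b ∈ S) {a : ℕ} (ha : a ∈ S) :
    ∀ n, n * a ∈ S := by
  intro n
  induction n with
  | zero => simpa using h0
  | succ n ih => rw [Nat.succ_mul]; exact hadd _ _ ih ha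

theorem stmt_14 (X : Set ℕ) (hX : 0 ∉ X) :
    IsCoe (coeClosure X) ↔ ∃ x ∈ X, Odd x := by
  constructor
  · intro hC
    by_contra hodd
    push_neg at hodd
    -- Even numbers form a Coe-monoid containing X
    set E : Set ℕ := {m | m % 2 = 0} with hE
    set f : ℕ → Set ℕ := fun n => {m | m % 2 = 0 ∨ n ≤ m} with hf
    have hEmono : IsCoeMonoid E := by
      refine ⟨Set.range f, ⟨f 0, Set.mem_range_self 0⟩, ?_, ?_⟩
      · rintro T ⟨n, rfl⟩
        refine ⟨⟨?_, ?_, ?_⟩, ?_⟩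
        · simp [hf]
        · intro a b ha hb
          simp only [hf, Set.mem_setOf_eq] at ha hb ⊢
          omega
        · apply Set.Finite.subset (Set.finite_Iio n)
          intro m hm
          simp only [hf, Set.mem_setOf_eq] at hm
          simp only [Set.mem_Iio]
          omega
        · intro x hx hxodd
          rw [Nat.odd_iff] at hxodd
          constructor <;> · simp only [hf, Set.mem_setOf_eq]; left; omega
      · ext m
        rw [Set.sInter_range, Set.mem_iInter]
        constructor
        · intro hm n
          simp only [hf, Set.mem_setOf_eq, hE]
          simp only [hE, Set.mem_setOf_eq] at hm
          omega
        · intro hm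
          have := hm (m + 1)
          simp only [hf, Set.mem_setOf_eq] at this
          simp only [hE, Set.mem_setOf_eq]
          omega
    have hXE : X ⊆ E := by
      intro x hxX
      have := hodd x hxX
      rw [Nat.odd_iff] at this
      simp only [hE, Set.mem_setOf_eq]
      omega
    have hCE : coeClosure X ⊆ E := Set.sInter_subset_of_mem ⟨hEmono, hXE⟩
    -- complement of coeClosure X contains all odd numbers, hence infinite
    have hinf : {m : ℕ | m ∉ coeClosure X}.Infinite := by
      have hinj : Function.Injective (fun n : ℕ => 2 * n + 1) := by
        intro a b hab
        dsimp only at hab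
        omega
      apply Set.infinite_of_injective_forall_mem hinj
      intro n hn
      have := hCE hn
      simp only [hE, Set.mem_setOf_eq] at this
      omega
    exact hinf hC.1.2.2
  · rintro ⟨x, hxX, hxodd⟩
    have hxpos : 0 < x := by
      rcases hxodd with ⟨k, rfl⟩; omega
    have key : ∀ y, x * x ≤ y → y ∈ coeClosure X := by
      intro y hy
      rw [mem_coeClosure_iff]
      intro S hS hXS
      have hxS : x ∈ S := hXS hxX
      have hx1S : x + 1 ∈ S := (hS.2 x hxS hxodd).2
      obtain ⟨h0S, haddS, -⟩ := hS.1
      set q := y / x with hq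
      set r := y % x with hr
      have hrx : r < x := Nat.mod_lt y hxpos
      have hxq : x ≤ q := by
        rw [hq, Nat.le_div_iff_mul_le hxpos]
        nlinarith
      have hyeq : y = x * q + r := (Nat.div_add_mod y x).symm
      have hd : q = (q - r) + r := by omega
      have hyeq2 : y = (q - r) * x + r * (x + 1) := by
        rw [hyeq]; nth_rewrite 1 [hd]; ring
      rw [hyeq2]
      exact haddS _ _ (mul_mem_of_mem h0S haddS hxS _)
        (mul_mem_of_mem h0S haddS hx1S _)
    refine ⟨⟨?_, ?_, ?_⟩, ?_⟩
    · rw [mem_coeClosure_iff]; intro S hS _; exact hS.1.1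
    · intro a b ha hb
      rw [mem_coeClosure_iff] at ha hb ⊢
      intro S hS hXS
      exact hS.1.2.1 a b (ha S hS hXS) (hb S hS hXS)
    · apply Set.Finite.subset (Set.finite_Iio (x * x))
      intro m hm
      simp only [Set.mem_setOf_eq] at hm
      simp only [Set.mem_Iio]
      by_contra h
      exact hm (key m (by omega))
    · intro z hz hzodd
      rw [mem_coeClosure_iff] at hz
      constructor <;>
      · rw [mem_coeClosure_iff]
        intro S hS hXS
        have := hS.2 z (hz S hS hXS) hzodd
        tauto
end

section
/- Let S be a maximal embedding dimension numerical semigroup with S ≠ ℕ. Then S is a Coe-semigroup if and only if m(S) is even and T = {s - m(S) : s ∈ S \ {0}} is a Coe-semigroup. -/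
open Pointwise

/-!
Write `m = m(S)` and `T = {t | t + m ∈ S}`. The elements of the Apéry set `Ap(S, m)` lie in
pairwise distinct residue classes mod `m`, so `Ap(S, m) \ {0}` has at most `m - 1` elements. The
minimal generators other than `m` belong to it, so under maximal embedding dimension they exhaust
it; a sum `s + t` of two nonzero elements is not a minimal generator, hence not in `Ap(S, m)`,
i.e. `s + t - m ∈ S`. This is exactly closure of `T` under addition.

For the Coe property: if `S` is Coe and `m` were odd, then `m - 1` would be a smaller nonzero
element, so `m` is even, and translating by the even number `m` preserves parity, so the Coe
property passes between `S` and `T` in both directions.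
-/

/-- The Apéry set `{s ∈ S | s - n ∉ S}`; the guard `n ≤ s` stops truncated subtraction from
discarding the elements below `n`. -/
def apery (S : Set ℕ) (n : ℕ) : Set ℕ := {s | s ∈ S ∧ (n ≤ s → s - n ∉ S)}

lemma mult_le {S : Set ℕ} {s : ℕ} (hs : s ∈ S) (h0 : s ≠ 0) : mult S ≤ s :=
  Nat.sInf_le ⟨hs, h0⟩

namespace IsNumSgrp

variable {S : Set ℕ}

lemma zero_mem (hS : IsNumSgrp S) : 0 ∈ S := hS.1

lemma add_mem (hS : IsNumSgrp S) {a b : ℕ} (ha : a ∈ S) (hb : b ∈ S) : a + b ∈ S :=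
  hS.2.1 a b ha hb

lemma mul_mem (hS : IsNumSgrp S) {n : ℕ} (hn : n ∈ S) (k : ℕ) : n * k ∈ S := by
  induction k with
  | zero => exact hS.zero_mem
  | succ k ih => exact hS.add_mem ih hn

lemma mult_mem_and_ne_zero (hS : IsNumSgrp S) : mult S ∈ S ∧ mult S ≠ 0 := by
  have hinf : S.Infinite := compl_compl S ▸ (hS.2.2 : Sᶜ.Finite).infinite_compl
  obtain ⟨s, hs, hs0⟩ := hinf.exists_gt 0
  exact Nat.sInf_mem (s := {x | x ∈ S ∧ x ≠ 0}) ⟨s, hs, hs0.ne'⟩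

lemma mult_mem (hS : IsNumSgrp S) : mult S ∈ S := hS.mult_mem_and_ne_zero.1

lemma mult_ne_zero (hS : IsNumSgrp S) : mult S ≠ 0 := hS.mult_mem_and_ne_zero.2

lemma two_le_mult (hS : IsNumSgrp S) (hne : S ≠ Set.univ) : 2 ≤ mult S := by
  have h1 : mult S ≠ 1 := fun h1 =>
    hne (Set.eq_univ_of_forall fun k => by simpa [h1] using hS.mul_mem hS.mult_mem k)
  have := hS.mult_ne_zero
  omega

lemma eq_of_mod_eq_of_mem_apery (hS : IsNumSgrp S) {n v w : ℕ} (hn : n ∈ S) (hv : v ∈ S)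
    (hw : w ∈ apery S n) (hvw : v ≤ w) (hmod : v % n = w % n) : v = w := by
  by_contra hne
  obtain ⟨k, hk⟩ : n ∣ w - v := Nat.dvd_of_mod_eq_zero (Nat.sub_mod_eq_zero_of_mod_eq hmod.symm)
  obtain ⟨j, rfl⟩ : ∃ j, k = j + 1 := Nat.exists_eq_succ_of_ne_zero (by rintro rfl; omega)
  rw [mul_add_one] at hk
  have hsub : w - n = v + n * j := by omega
  exact hw.2 (by omega) (hsub ▸ hS.add_mem hv (hS.mul_mem hn j))

lemma ncard_le_of_subset_apery (hS : IsNumSgrp S) {n : ℕ} (hn : n ∈ S) {A : Set ℕ}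
    (hA : A ⊆ apery S n) (h0 : 0 ∉ A) : A.ncard ≤ n - 1 := by
  have hmaps : ∀ a ∈ A, a % n ∈ Set.Ico 1 n := by
    intro a ha
    have hn0 : n ≠ 0 := by
      rintro rfl
      exact (hA ha).2 (Nat.zero_le a) (hA ha).1
    have hmod : a % n ≠ 0 := fun hmod =>
      h0 (hS.eq_of_mod_eq_of_mem_apery hn hS.zero_mem (hA ha) (Nat.zero_le a)
        (by simp [hmod]) ▸ ha)
    exact ⟨Nat.one_le_iff_ne_zero.mpr hmod, Nat.mod_lt a (Nat.pos_of_ne_zero hn0)⟩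
  have hinj : Set.InjOn (· % n) A := by
    intro v hv w hw hmod
    rcases le_total v w with hvw | hwv
    · exact hS.eq_of_mod_eq_of_mem_apery hn (hA hv).1 (hA hw) hvw hmod
    · exact (hS.eq_of_mod_eq_of_mem_apery hn (hA hw).1 (hA hv) hwv hmod.symm).symm
  calc A.ncard ≤ (Set.Ico 1 n).ncard := Set.ncard_le_ncard_of_injOn _ hmaps hinj
    _ = n - 1 := by simp

lemma mult_mem_msg (hS : IsNumSgrp S) : mult S ∈ msg S := by
  refine ⟨⟨hS.mult_mem, hS.mult_ne_zero⟩, ?_⟩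
  rintro ⟨a, ⟨ha, ha0⟩, b, ⟨hb, hb0⟩, hab⟩
  have := mult_le ha ha0
  have := mult_le hb hb0
  have := hS.mult_ne_zero
  omega

lemma msg_diff_subset_apery (hS : IsNumSgrp S) : msg S \ {mult S} ⊆ apery S (mult S) := by
  rintro x ⟨⟨⟨hx, hx0⟩, hxsum⟩, hxm⟩
  refine ⟨hx, fun hmx hsub => hxsum ?_⟩
  have hxm : x ≠ mult S := hxm
  exact ⟨mult S, ⟨hS.mult_mem, hS.mult_ne_zero⟩, x - mult S,
    ⟨hsub, by simp only [Set.mem_singleton_iff]; omega⟩, by omega⟩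

lemma sub_mult_mem_of_med (hS : IsNumSgrp S) (hmed : (msg S).ncard = mult S) {s t : ℕ}
    (hs : s ∈ S) (hs0 : s ≠ 0) (ht : t ∈ S) (ht0 : t ≠ 0) : s + t - mult S ∈ S := by
  have hm0 := hS.mult_ne_zero
  by_contra h
  have hsum : s + t ∉ msg S := fun hmsg => hmsg.2 ⟨s, ⟨hs, hs0⟩, t, ⟨ht, ht0⟩, rfl⟩
  have hsub : insert (s + t) (msg S \ {mult S}) ⊆ apery S (mult S) :=
    Set.insert_subset ⟨hS.add_mem hs ht, fun _ => h⟩ hS.msg_diff_subset_apery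
  have h0 : 0 ∉ insert (s + t) (msg S \ {mult S}) := by
    rintro (h0 | ⟨⟨⟨-, h0⟩, -⟩, -⟩)
    · omega
    · exact h0 rfl
  have hfin : (msg S).Finite := Set.finite_of_ncard_ne_zero (hmed ▸ hm0)
  have hcard : (insert (s + t) (msg S \ {mult S})).ncard = mult S := by
    rw [Set.ncard_insert_of_notMem (fun h' => hsum h'.1) hfin.sdiff,
      Set.ncard_sdiff_singleton_of_mem hS.mult_mem_msg, hmed]
    omega
  have := hS.ncard_le_of_subset_apery hS.mult_mem hsub h0
  omega

lemma setOf_sub_mult_eq (hS : IsNumSgrp S) :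
    {t : ℕ | ∃ s ∈ S, s ≠ 0 ∧ t = s - mult S} = {t | t + mult S ∈ S} := by
  ext t
  constructor
  · rintro ⟨s, hs, hs0, rfl⟩
    rwa [Set.mem_ofPred_eq, Nat.sub_add_cancel (mult_le hs hs0)]
  · intro h
    exact ⟨t + mult S, h, by have := hS.mult_ne_zero; omega, by simp⟩

lemma shift_mult_of_med (hS : IsNumSgrp S) (hmed : (msg S).ncard = mult S) :
    IsNumSgrp {t | t + mult S ∈ S} := by
  have hm0 := hS.mult_ne_zero
  refine ⟨by simpa using hS.mult_mem, fun a b ha hb => ?_,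
    hS.2.2.preimage (add_left_injective (mult S)).injOn⟩
  have := hS.sub_mult_mem_of_med hmed ha (by omega) hb (by omega)
  rwa [show a + mult S + (b + mult S) - mult S = a + b + mult S by omega] at this

end IsNumSgrp

namespace IsCoe

variable {S : Set ℕ}

lemma even_mult (h : IsCoe S) (hne : S ≠ Set.univ) : Even (mult S) := by
  by_contra hodd
  have hm2 := h.1.two_le_mult hne
  have := mult_le (h.2 _ h.1.mult_mem (Nat.not_even_iff_odd.mp hodd)).1 (by omega)
  omega

lemma shift_mult (h : IsCoe S) (hne : S ≠ Set.univ) (hmed : (msg S).ncard = mult S) :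
    IsCoe {t | t + mult S ∈ S} := by
  refine ⟨h.1.shift_mult_of_med hmed, fun x hx hodd => ?_⟩
  obtain ⟨hpred, hsucc⟩ := h.2 _ hx (hodd.add_even (h.even_mult hne))
  have := hodd.pos
  simp only [Set.mem_ofPred_eq]
  exact ⟨by rwa [← Nat.sub_add_comm this], by rwa [add_right_comm]⟩

lemma of_shift_mult (hS : IsNumSgrp S) (hm : Even (mult S))
    (hT : IsCoe {t | t + mult S ∈ S}) : IsCoe S := by
  refine ⟨hS, fun x hx hodd => ?_⟩
  have hxm : mult S ≤ x := mult_le hx hodd.pos.ne'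
  have hx' : x - mult S ∈ {t | t + mult S ∈ S} := by simpa [Nat.sub_add_cancel hxm]
  have hodd' : Odd (x - mult S) := (Nat.odd_sub hxm).mpr (iff_of_true hodd hm)
  obtain ⟨hpred, hsucc⟩ := hT.2 _ hx' hodd'
  have := hodd'.pos
  simp only [Set.mem_ofPred_eq] at hpred hsucc
  exact ⟨by convert hpred using 1; omega, by convert hsucc using 1; omega⟩

end IsCoe

theorem stmt_15 (S : Set ℕ) (hS : IsNumSgrp S) (hne : S ≠ Set.univ)
    (hmed : (msg S).ncard = mult S) :
    IsCoe S ↔ (Even (mult S) ∧ IsCoe {t : ℕ | ∃ s ∈ S, s ≠ 0 ∧ t = s - mult S}) := by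
  rw [hS.setOf_sub_mult_eq]
  exact ⟨fun h => ⟨h.even_mult hne, h.shift_mult hne hmed⟩,
    fun ⟨hm, hT⟩ => IsCoe.of_shift_mult hS hm hT⟩
end

section
/- Let S be a numerical semigroup with s, s+1 ∈ S, and let T = 2S ∪ ({2s+1} + 2S). Then T is a Coe-semigroup whose unique odd minimal generator is 2s+1; moreover m(T) = 2m(S), F(T) = 2F(S) + 2s + 1, g(T) = 2g(S) + s, and e(T) = e(S) + 1. -/
open Pointwise

theorem stmt_17 (S : Set ℕ) (hS : IsNumSgrp S) (hne : S ≠ Set.univ)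
    (s : ℕ) (hs : s ∈ S) (hs1 : s + 1 ∈ S) :
    IsCoe ({t | ∃ a ∈ S, t = 2 * a} ∪ {t | ∃ a ∈ S, t = 2 * s + 1 + 2 * a}) ∧
    (2 * s + 1 ∈ msg ({t | ∃ a ∈ S, t = 2 * a} ∪ {t | ∃ a ∈ S, t = 2 * s + 1 + 2 * a}) ∧
      ∀ y ∈ msg ({t | ∃ a ∈ S, t = 2 * a} ∪ {t | ∃ a ∈ S, t = 2 * s + 1 + 2 * a}),
        Odd y → y = 2 * s + 1) ∧
    mult ({t | ∃ a ∈ S, t = 2 * a} ∪ {t | ∃ a ∈ S, t = 2 * s + 1 + 2 * a}) = 2 * mult S ∧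
    frob ({t | ∃ a ∈ S, t = 2 * a} ∪ {t | ∃ a ∈ S, t = 2 * s + 1 + 2 * a}) =
      2 * frob S + 2 * s + 1 ∧
    genus ({t | ∃ a ∈ S, t = 2 * a} ∪ {t | ∃ a ∈ S, t = 2 * s + 1 + 2 * a}) =
      2 * genus S + s ∧
    (msg ({t | ∃ a ∈ S, t = 2 * a} ∪ {t | ∃ a ∈ S, t = 2 * s + 1 + 2 * a})).ncard =
      (msg S).ncard + 1 := by
  obtain ⟨h0, hadd, hfin⟩ := hS
  set T := ({t | ∃ a ∈ S, t = 2 * a} ∪ {t | ∃ a ∈ S, t = 2 * s + 1 + 2 * a}) with hTdef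
  have memT : ∀ x : ℕ, x ∈ T ↔ (∃ a ∈ S, x = 2 * a) ∨ (∃ a ∈ S, x = 2 * s + 1 + 2 * a) :=
    fun x => Iff.rfl
  -- s ≥ 1
  have hs_pos : 1 ≤ s := by
    rcases Nat.eq_zero_or_pos s with h | h
    · exfalso
      apply hne
      apply Set.eq_univ_of_forall
      intro n
      induction n with
      | zero => exact h0
      | succ n ih =>
        have h1 : (1 : ℕ) ∈ S := by simpa [h] using hs1
        exact hadd n 1 ih h1
    · exact h
  -- Frobenius facts
  have hGne : {x : ℕ | x ∉ S}.Nonempty := by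
    rcases (Set.ne_univ_iff_exists_notMem S).mp hne with ⟨x, hx⟩
    exact ⟨x, hx⟩
  set F := sSup {x : ℕ | x ∉ S} with hFdef
  have hFmem : F ∉ S := Nat.sSup_mem hGne hfin.bddAbove
  have hFub : ∀ x, x ∉ S → x ≤ F := fun x hx => le_csSup hfin.bddAbove hx
  have hSbig : ∀ a, F < a → a ∈ S := by
    intro a ha; by_contra h; exact absurd (hFub a h) (by omega)
  -- multiplicity facts
  set m := sInf {x : ℕ | x ∈ S ∧ x ≠ 0} with hmdef
  have hne' : {x : ℕ | x ∈ S ∧ x ≠ 0}.Nonempty := ⟨F + 1, hSbig _ (by omega), by omega⟩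
  have hmmem : m ∈ S ∧ m ≠ 0 := Nat.sInf_mem hne'
  have hmle : ∀ x, x ∈ S → x ≠ 0 → m ≤ x := fun x hx h0' => Nat.sInf_le ⟨hx, h0'⟩
  have hms : m ≤ s := hmle s hs (by omega)
  -- basic T facts
  have hT0 : (0 : ℕ) ∈ T := Or.inl ⟨0, h0, rfl⟩
  have hTadd : ∀ a b, a ∈ T → b ∈ T → a + b ∈ T := by
    rintro x y (⟨a, ha, rfl⟩ | ⟨a, ha, rfl⟩) (⟨b, hb, rfl⟩ | ⟨b, hb, rfl⟩)
    · exact Or.inl ⟨a + b, hadd a b ha hb, by ring⟩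
    · exact Or.inr ⟨a + b, hadd a b ha hb, by ring⟩
    · exact Or.inr ⟨a + b, hadd a b ha hb, by ring⟩
    · refine Or.inl ⟨s + (s + 1 + (a + b)), hadd s _ hs ?_, by ring⟩
      exact hadd (s + 1) (a + b) hs1 (hadd a b ha hb)
  have hTbig : ∀ x, 2 * F + 2 * s + 1 < x → x ∈ T := by
    intro x hx
    rcases Nat.even_or_odd x with ⟨a, ha⟩ | ⟨a, ha⟩
    · exact Or.inl ⟨a, hSbig a (by omega), by omega⟩
    · exact Or.inr ⟨a - s, hSbig _ (by omega), by omega⟩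
  have hTfin : {x : ℕ | x ∉ T}.Finite := by
    apply (Set.finite_Iic (2 * F + 2 * s + 1)).subset
    intro x hx
    by_contra h
    simp only [Set.mem_Iic, not_le] at h
    exact hx (hTbig x h)
  have hNum : IsNumSgrp T := ⟨hT0, hTadd, hTfin⟩
  -- Coe
  have hCoe : ∀ x ∈ T, Odd x → x - 1 ∈ T ∧ x + 1 ∈ T := by
    rintro x (⟨a, ha, rfl⟩ | ⟨a, ha, rfl⟩) hodd
    · exfalso; obtain ⟨k, hk⟩ := hodd; omega
    · constructor
      · exact Or.inl ⟨s + a, hadd s a hs ha, by omega⟩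
      · exact Or.inl ⟨s + 1 + a, hadd (s + 1) a hs1 ha, by omega⟩
  -- msg facts
  have h2s1T : 2 * s + 1 ∈ T := Or.inr ⟨0, h0, by ring⟩
  have h2s1msg : 2 * s + 1 ∈ msg T := by
    refine ⟨⟨h2s1T, by simp⟩, ?_⟩
    rintro ⟨u, ⟨hu, hu0⟩, v, ⟨hv, hv0⟩, heq⟩
    simp only [Set.mem_singleton_iff] at hu0 hv0
    rcases hu with ⟨a, ha, rfl⟩ | ⟨a, ha, rfl⟩ <;>
      rcases hv with ⟨b, hb, rfl⟩ | ⟨b, hb, rfl⟩ <;> omega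
  have hodduniq : ∀ y ∈ msg T, Odd y → y = 2 * s + 1 := by
    rintro y ⟨⟨hyT, hy0⟩, hnd⟩ hodd
    rcases hyT with ⟨a, ha, rfl⟩ | ⟨a, ha, rfl⟩
    · exfalso; obtain ⟨k, hk⟩ := hodd; omega
    · rcases Nat.eq_zero_or_pos a with rfl | hap
      · ring
      · exfalso
        apply hnd
        refine ⟨2 * s + 1, ⟨h2s1T, by simp⟩, 2 * a,
          ⟨Or.inl ⟨a, ha, rfl⟩, by simp; omega⟩, by ring⟩
  -- mult
  have hmultT : mult T = 2 * mult S := by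
    show sInf {x : ℕ | x ∈ T ∧ x ≠ 0} = 2 * m
    have hmem : 2 * m ∈ {x : ℕ | x ∈ T ∧ x ≠ 0} :=
      ⟨Or.inl ⟨m, hmmem.1, rfl⟩, by have := hmmem.2; omega⟩
    apply le_antisymm (Nat.sInf_le hmem)
    apply le_csInf ⟨2 * m, hmem⟩
    rintro x ⟨hx, hx0⟩
    rcases hx with ⟨a, ha, rfl⟩ | ⟨a, ha, rfl⟩
    · have : m ≤ a := hmle a ha (by omega)
      omega
    · omega
  -- frob
  have hgap : 2 * F + 2 * s + 1 ∉ T := by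
    rintro (⟨a, ha, heq⟩ | ⟨a, ha, heq⟩)
    · omega
    · have : a = F := by omega
      exact hFmem (this ▸ ha)
  have hfrobT : frob T = 2 * frob S + 2 * s + 1 := by
    show sSup {x : ℕ | x ∉ T} = 2 * F + 2 * s + 1
    have hub : ∀ x ∈ {x : ℕ | x ∉ T}, x ≤ 2 * F + 2 * s + 1 := by
      intro x hx
      by_contra h
      exact hx (hTbig x (by omega))
    have hgne : {x : ℕ | x ∉ T}.Nonempty := ⟨2 * F + 2 * s + 1, hgap⟩
    exact le_antisymm (csSup_le hgne hub) (le_csSup hTfin.bddAbove hgap)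
  -- genus
  have hgapsT : {x : ℕ | x ∉ T} =
      (fun a => 2 * a) '' {x : ℕ | x ∉ S} ∪
      ((fun a => 2 * s + 1 + 2 * a) '' {x : ℕ | x ∉ S} ∪
        (fun k => 2 * k + 1) '' (Set.Iio s)) := by
    ext x
    simp only [Set.mem_union, Set.mem_image, Set.mem_setOf_eq, Set.mem_Iio]
    constructor
    · intro hx
      rcases Nat.even_or_odd x with ⟨a, ha⟩ | ⟨a, ha⟩
      · refine Or.inl ⟨a, ?_, by omega⟩
        intro h; exact hx (Or.inl ⟨a, h, by omega⟩)
      · by_cases hcase : a < s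
        · exact Or.inr (Or.inr ⟨a, hcase, by omega⟩)
        · refine Or.inr (Or.inl ⟨a - s, ?_, by omega⟩)
          intro h; exact hx (Or.inr ⟨a - s, h, by omega⟩)
    · rintro (⟨a, ha, rfl⟩ | ⟨a, ha, rfl⟩ | ⟨k, hk, rfl⟩) <;> intro hmem <;>
        rcases hmem with ⟨b, hb, heq⟩ | ⟨b, hb, heq⟩
      · have : a = b := by omega
        exact ha (this ▸ hb)
      · omega
      · omega
      · have : a = b := by omega
        exact ha (this ▸ hb)
      · omega
      · omega
  have inj1 : Function.Injective (fun a : ℕ => 2 * a) := fun a b h => by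
    simp only [] at h; omega
  have inj2 : Function.Injective (fun a : ℕ => 2 * s + 1 + 2 * a) := fun a b h => by
    simp only [] at h; omega
  have inj3 : Function.Injective (fun k : ℕ => 2 * k + 1) := fun a b h => by
    simp only [] at h; omega
  have hgenusT : genus T = 2 * genus S + s := by
    show {x : ℕ | x ∉ T}.ncard = 2 * {x : ℕ | x ∉ S}.ncard + s
    rw [hgapsT]
    have d1 : Disjoint ((fun a : ℕ => 2 * a) '' {x : ℕ | x ∉ S})
        ((fun a : ℕ => 2 * s + 1 + 2 * a) '' {x : ℕ | x ∉ S} ∪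
          (fun k : ℕ => 2 * k + 1) '' (Set.Iio s)) := by
      rw [Set.disjoint_left]
      intro x hx1 hx2
      simp only [Set.mem_union, Set.mem_image, Set.mem_setOf_eq, Set.mem_Iio] at hx1 hx2
      obtain ⟨a, _, rfl⟩ := hx1
      rcases hx2 with ⟨b, _, h⟩ | ⟨b, _, h⟩ <;> omega
    have d2 : Disjoint ((fun a : ℕ => 2 * s + 1 + 2 * a) '' {x : ℕ | x ∉ S})
        ((fun k : ℕ => 2 * k + 1) '' (Set.Iio s)) := by
      rw [Set.disjoint_left]
      intro x hx1 hx2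
      simp only [Set.mem_image, Set.mem_setOf_eq, Set.mem_Iio] at hx1 hx2
      obtain ⟨a, _, rfl⟩ := hx1
      obtain ⟨b, hb, h⟩ := hx2
      omega
    rw [Set.ncard_union_eq d1 (hfin.image _) ((hfin.image _).union ((Set.finite_Iio s).image _)),
      Set.ncard_union_eq d2 (hfin.image _) ((Set.finite_Iio s).image _),
      Set.ncard_image_of_injective _ inj1, Set.ncard_image_of_injective _ inj2,
      Set.ncard_image_of_injective _ inj3]
    have : (Set.Iio s).ncard = s := by
      rw [← Finset.coe_Iio, Set.ncard_coe_finset, Nat.card_Iio]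
    omega
  -- msg S finite
  have hmsgSfin : (msg S).Finite := by
    apply (Set.finite_Iic (F + m)).subset
    intro x hx
    by_contra h
    simp only [Set.mem_Iic, not_le] at h
    obtain ⟨⟨hxS, hx0⟩, hnd⟩ := hx
    apply hnd
    refine ⟨m, ⟨hmmem.1, by simpa using hmmem.2⟩, x - m,
      ⟨hSbig _ (by omega), by simp; omega⟩, by omega⟩
  -- msg T description
  have hmsgTeq : msg T = insert (2 * s + 1) ((fun a => 2 * a) '' msg S) := by
    ext y
    simp only [Set.mem_insert_iff, Set.mem_image]
    constructor
    · rintro ⟨⟨hyT, hy0⟩, hnd⟩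
      rcases hyT with ⟨a, ha, rfl⟩ | ⟨a, ha, rfl⟩
      · right
        refine ⟨a, ⟨⟨ha, ?_⟩, ?_⟩, rfl⟩
        · simp only [Set.mem_singleton_iff] at hy0 ⊢
          omega
        · rintro ⟨b, ⟨hbS, hb0⟩, c, ⟨hcS, hc0⟩, heq⟩
          simp only [Set.mem_singleton_iff] at hb0 hc0
          apply hnd
          refine ⟨2 * b, ⟨Or.inl ⟨b, hbS, rfl⟩, ?_⟩, 2 * c,
            ⟨Or.inl ⟨c, hcS, rfl⟩, ?_⟩, by omega⟩
          · simp only [Set.mem_singleton_iff]; omega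
          · simp only [Set.mem_singleton_iff]; omega
      · rcases Nat.eq_zero_or_pos a with rfl | hap
        · left; ring
        · exfalso
          apply hnd
          refine ⟨2 * s + 1, ⟨h2s1T, by simp⟩, 2 * a,
            ⟨Or.inl ⟨a, ha, rfl⟩, ?_⟩, by ring⟩
          simp only [Set.mem_singleton_iff]; omega
    · rintro (rfl | ⟨a, ⟨⟨haS, ha0⟩, hand⟩, heq⟩)
      · exact h2s1msg
      · simp only [Set.mem_singleton_iff] at ha0
        subst heq
        refine ⟨⟨Or.inl ⟨a, haS, rfl⟩, by simp only [Set.mem_singleton_iff]; omega⟩, ?_⟩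
        rintro ⟨u, ⟨hu, hu0⟩, v, ⟨hv, hv0⟩, heq⟩
        simp only [Set.mem_singleton_iff] at hu0 hv0
        rcases hu with ⟨b, hb, rfl⟩ | ⟨b, hb, rfl⟩ <;>
          rcases hv with ⟨c, hc, rfl⟩ | ⟨c, hc, rfl⟩
        · apply hand
          refine ⟨b, ⟨hb, ?_⟩, c, ⟨hc, ?_⟩, by omega⟩
          · simp only [Set.mem_singleton_iff]; omega
          · simp only [Set.mem_singleton_iff]; omega
        · omega
        · omega
        · apply hand
          refine ⟨s, ⟨hs, ?_⟩, s + 1 + (b + c),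
            ⟨hadd (s + 1) (b + c) hs1 (hadd b c hb hc), ?_⟩, by omega⟩
          · simp only [Set.mem_singleton_iff]; omega
          · simp only [Set.mem_singleton_iff]; omega
  have hcount : (msg T).ncard = (msg S).ncard + 1 := by
    have hnm : 2 * s + 1 ∉ (fun a => 2 * a) '' msg S := by
      intro hmem
      simp only [Set.mem_image] at hmem
      obtain ⟨a, _, h⟩ := hmem
      omega
    rw [hmsgTeq, Set.ncard_insert_of_notMem hnm (hmsgSfin.image _),
      Set.ncard_image_of_injective _ inj1]
  exact ⟨⟨hNum, hCoe⟩, ⟨h2s1msg, hodduniq⟩, hmultT, hfrobT, hgenusT, hcount⟩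
end

section
/- Let S be a numerical semigroup with s, s+1 ∈ S satisfying the Wilf conjecture g(S) ≤ (e(S)-1)·n(S). Then T = 2S ∪ ({2s+1} + 2S) also satisfies the Wilf conjecture g(T) ≤ (e(T)-1)·n(T). -/
open Pointwise

/-- n(S): the number of elements of S smaller than the Frobenius number. -/
noncomputable def nsmall (S : Set ℕ) : ℕ := {x : ℕ | x ∈ S ∧ x < frob S}.ncard

lemma aux_frob_lt_mem {S : Set ℕ} (hfin : {x | x ∉ S}.Finite) {x : ℕ}
    (hx : frob S < x) : x ∈ S := by
  by_contra h
  exact absurd (le_csSup hfin.bddAbove h) (not_le.mpr hx)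

lemma aux_msg_finite {S : Set ℕ} (hfin : {x | x ∉ S}.Finite) : (msg S).Finite := by
  apply Set.Finite.subset (Set.finite_Iic (2 * frob S + 1))
  intro x hx
  by_contra h
  simp only [Set.mem_Iic, not_le] at h
  refine hx.2 ⟨frob S + 1, ⟨aux_frob_lt_mem hfin (by omega), by simp⟩,
    x - (frob S + 1), ⟨aux_frob_lt_mem hfin (by omega), by simp; omega⟩, by omega⟩

theorem stmt_18 (S : Set ℕ) (hS : IsNumSgrp S) (hne : S ≠ Set.univ)
    (s : ℕ) (hs : s ∈ S) (hs1 : s + 1 ∈ S)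
    (hwilf : genus S ≤ ((msg S).ncard - 1) * nsmall S) :
    genus ({t | ∃ a ∈ S, t = 2 * a} ∪ {t | ∃ a ∈ S, t = 2 * s + 1 + 2 * a}) ≤
      ((msg ({t | ∃ a ∈ S, t = 2 * a} ∪ {t | ∃ a ∈ S, t = 2 * s + 1 + 2 * a})).ncard - 1) *
        nsmall ({t | ∃ a ∈ S, t = 2 * a} ∪ {t | ∃ a ∈ S, t = 2 * s + 1 + 2 * a}) := by
  classical
  set T : Set ℕ := {t | ∃ a ∈ S, t = 2 * a} ∪ {t | ∃ a ∈ S, t = 2 * s + 1 + 2 * a} with hTdef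
  obtain ⟨h0, hadd, hfin⟩ := hS
  -- s ≥ 1
  have hs1pos : 1 ≤ s := by
    by_contra h
    apply hne
    have h1 : (1 : ℕ) ∈ S := by
      have : s = 0 := by omega
      rwa [this, zero_add] at hs1
    ext n
    simp only [Set.mem_univ, iff_true]
    induction n with
    | zero => exact h0
    | succ n ih => exact hadd n 1 ih h1
  -- gaps of S
  have hGne : {x | x ∉ S}.Nonempty := by
    obtain ⟨x, hx⟩ := (Set.ne_univ_iff_exists_notMem S).mp hne
    exact ⟨x, hx⟩
  have hFgap : frob S ∉ S := hGne.csSup_mem hfin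
  have hgt : ∀ x, frob S < x → x ∈ S := fun x hx => aux_frob_lt_mem hfin hx
  -- membership in T
  have hTmem : ∀ x, x ∈ T ↔ (∃ a ∈ S, x = 2 * a) ∨ (∃ a ∈ S, x = 2 * s + 1 + 2 * a) := by
    intro x; rfl
  -- T is closed under addition
  have hTadd : ∀ a b, a ∈ T → b ∈ T → a + b ∈ T := by
    intro a b ha hb
    rcases (hTmem a).mp ha with ⟨a', ha', rfl⟩ | ⟨a', ha', rfl⟩ <;>
      rcases (hTmem b).mp hb with ⟨b', hb', rfl⟩ | ⟨b', hb', rfl⟩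
    · exact Or.inl ⟨a' + b', hadd _ _ ha' hb', by ring⟩
    · exact Or.inr ⟨a' + b', hadd _ _ ha' hb', by ring⟩
    · exact Or.inr ⟨a' + b', hadd _ _ ha' hb', by ring⟩
    · exact Or.inl ⟨(s + a') + (s + 1 + b'), hadd _ _ (hadd _ _ hs ha') (hadd _ _ hs1 hb'), by ring⟩
  -- characterization of gaps of T
  have hTgap : ∀ x, x ∉ T → (∃ a, a ∉ S ∧ x = 2 * a) ∨ (∃ b, b < s ∧ x = 2 * b + 1) ∨
      (∃ c, c ∉ S ∧ x = 2 * (s + c) + 1) := by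
    intro x hx
    rcases Nat.even_or_odd x with ⟨a, ha⟩ | ⟨b, hb⟩
    · refine Or.inl ⟨a, fun haS => hx ((hTmem x).mpr (Or.inl ⟨a, haS, by omega⟩)), by omega⟩
    · by_cases hbs : b < s
      · exact Or.inr (Or.inl ⟨b, hbs, by omega⟩)
      · refine Or.inr (Or.inr ⟨b - s, fun hc => hx ((hTmem x).mpr (Or.inr ⟨b - s, hc, by omega⟩)), by omega⟩)
  have hGT_sub : {x | x ∉ T} ⊆ ((fun a => 2 * a) '' {x | x ∉ S}) ∪
      ((fun b => 2 * b + 1) '' Set.Iio s) ∪ ((fun c => 2 * (s + c) + 1) '' {x | x ∉ S}) := by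
    intro x hx
    rcases hTgap x hx with ⟨a, ha, rfl⟩ | ⟨b, hb, rfl⟩ | ⟨c, hc, rfl⟩
    · exact Or.inl (Or.inl ⟨a, ha, rfl⟩)
    · exact Or.inl (Or.inr ⟨b, hb, rfl⟩)
    · exact Or.inr ⟨c, hc, rfl⟩
  have hGTfin : {x | x ∉ T}.Finite :=
    (((hfin.image _).union ((Set.finite_Iio s).image _)).union (hfin.image _)).subset hGT_sub
  -- genus T ≤ 2 * genus S + s
  have hIio_card : (Set.Iio s).ncard = s := by
    rw [← Finset.coe_Iio, Set.ncard_coe_finset, Nat.card_Iio]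
  have hgenusT : genus T ≤ 2 * genus S + s := by
    have h1 := Set.ncard_le_ncard hGT_sub
      ((((hfin.image _).union ((Set.finite_Iio s).image _)).union (hfin.image _)))
    have h2 := Set.ncard_union_le (((fun a => 2 * a) '' {x | x ∉ S}) ∪
      ((fun b => 2 * b + 1) '' Set.Iio s)) ((fun c => 2 * (s + c) + 1) '' {x | x ∉ S})
    have h3 := Set.ncard_union_le ((fun a => 2 * a) '' {x | x ∉ S})
      ((fun b => 2 * b + 1) '' Set.Iio s)
    have h4 := Set.ncard_image_le (f := fun a => 2 * a) (s := {x | x ∉ S}) hfin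
    have h5 := Set.ncard_image_le (f := fun b => 2 * b + 1) (s := Set.Iio s) (Set.finite_Iio s)
    have h6 := Set.ncard_image_le (f := fun c => 2 * (s + c) + 1) (s := {x | x ∉ S}) hfin
    have : genus T = {x | x ∉ T}.ncard := rfl
    rw [this]
    have hg : genus S = {x | x ∉ S}.ncard := rfl
    omega
  -- Frobenius of T
  have hFT_gap : 2 * frob S + 2 * s + 1 ∉ T := by
    intro hx
    rcases (hTmem _).mp hx with ⟨a, ha, h⟩ | ⟨a, ha, h⟩
    · omega
    · have : a = frob S := by omega
      exact hFgap (this ▸ ha)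
  have hfrobT : 2 * frob S + 2 * s + 1 ≤ frob T := le_csSup hGTfin.bddAbove hFT_gap
  -- nsmall T ≥ 2 * nsmall S + s
  set A : Set ℕ := {x | x ∈ S ∧ x < frob S} with hAdef
  have hAfin : A.Finite := (Set.finite_Iio (frob S)).subset (fun x hx => hx.2)
  set U1 : Set ℕ := (fun a => 2 * a) '' A with hU1
  set U2 : Set ℕ := (fun a => 2 * a) '' Set.Ioc (frob S) (frob S + s) with hU2
  set U3 : Set ℕ := (fun a => 2 * s + 1 + 2 * a) '' A with hU3
  have hUsub : U1 ∪ U2 ∪ U3 ⊆ {x | x ∈ T ∧ x < frob T} := by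
    rintro x ((⟨a, ⟨haS, haF⟩, rfl⟩ | ⟨a, ha, rfl⟩) | ⟨a, ⟨haS, haF⟩, rfl⟩)
    · exact ⟨(hTmem _).mpr (Or.inl ⟨a, haS, rfl⟩), show 2 * a < frob T by omega⟩
    · simp only [Set.mem_Ioc] at ha
      exact ⟨(hTmem _).mpr (Or.inl ⟨a, hgt a ha.1, rfl⟩), show 2 * a < frob T by omega⟩
    · exact ⟨(hTmem _).mpr (Or.inr ⟨a, haS, rfl⟩), show 2 * s + 1 + 2 * a < frob T by omega⟩
  have hinj2 : Function.Injective (fun a : ℕ => 2 * a) := fun a b h => by simp only [] at h; omega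
  have hinj3 : Function.Injective (fun a : ℕ => 2 * s + 1 + 2 * a) := fun a b h => by simp only [] at h; omega
  have hU1card : U1.ncard = nsmall S := Set.ncard_image_of_injective A hinj2
  have hU2card : U2.ncard = s := by
    rw [hU2, Set.ncard_image_of_injective _ hinj2, ← Finset.coe_Ioc, Set.ncard_coe_finset,
      Nat.card_Ioc]
    omega
  have hU3card : U3.ncard = nsmall S := Set.ncard_image_of_injective A hinj3
  have hd12 : Disjoint U1 U2 := by
    rw [Set.disjoint_left]
    rintro x ⟨a, ⟨_, haF⟩, rfl⟩ ⟨b, hb, h⟩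
    simp only [Set.mem_Ioc] at hb
    simp only [] at h
    omega
  have hd123 : Disjoint (U1 ∪ U2) U3 := by
    rw [Set.disjoint_left]
    rintro x (⟨a, _, rfl⟩ | ⟨a, _, rfl⟩) ⟨b, _, h⟩ <;> simp only [] at h <;> omega
  have hU1fin : U1.Finite := hAfin.image _
  have hU2fin : U2.Finite := (Set.finite_Ioc _ _).image _
  have hU3fin : U3.Finite := hAfin.image _
  have hUcard : (U1 ∪ U2 ∪ U3).ncard = 2 * nsmall S + s := by
    rw [Set.ncard_union_eq hd123 (hU1fin.union hU2fin) hU3fin,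
      Set.ncard_union_eq hd12 hU1fin hU2fin, hU1card, hU2card, hU3card]
    ring
  have hnsmallT : 2 * nsmall S + s ≤ nsmall T := by
    have hTsmall_fin : {x | x ∈ T ∧ x < frob T}.Finite :=
      (Set.finite_Iio (frob T)).subset (fun x hx => hx.2)
    have := Set.ncard_le_ncard hUsub hTsmall_fin
    rw [hUcard] at this
    exact this
  -- msg T ⊇ insert (2s+1) (2 · msg S)
  have hmsgS_fin : (msg S).Finite := aux_msg_finite hfin
  have hmsgT_fin : (msg T).Finite := aux_msg_finite hGTfin
  have hmem_msg : insert (2 * s + 1) ((fun m => 2 * m) '' msg S) ⊆ msg T := by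
    rintro x (rfl | ⟨m, hm, rfl⟩)
    · constructor
      · exact ⟨(hTmem _).mpr (Or.inr ⟨0, h0, by ring⟩), by simp⟩
      · rintro ⟨a, ⟨haT, ha0⟩, b, ⟨hbT, hb0⟩, heq⟩
        simp only [Set.mem_singleton_iff] at ha0 hb0
        rcases (hTmem a).mp haT with ⟨a', ha', rfl⟩ | ⟨a', ha', rfl⟩ <;>
          rcases (hTmem b).mp hbT with ⟨b', hb', rfl⟩ | ⟨b', hb', rfl⟩ <;> omega
    · obtain ⟨⟨hmS, hm0⟩, hmsum⟩ := hm
      simp only [Set.mem_singleton_iff] at hm0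
      constructor
      · exact ⟨(hTmem _).mpr (Or.inl ⟨m, hmS, rfl⟩), by simp; omega⟩
      · rintro ⟨a, ⟨haT, ha0⟩, b, ⟨hbT, hb0⟩, heq⟩
        simp only [Set.mem_singleton_iff] at ha0 hb0
        simp only [] at heq
        rcases (hTmem a).mp haT with ⟨a', ha', rfl⟩ | ⟨a', ha', rfl⟩ <;>
          rcases (hTmem b).mp hbT with ⟨b', hb', rfl⟩ | ⟨b', hb', rfl⟩
        · exact hmsum ⟨a', ⟨ha', by simp; omega⟩, b', ⟨hb', by simp; omega⟩, by omega⟩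
        · omega
        · omega
        · refine hmsum ⟨s + a', ⟨hadd _ _ hs ha', by simp; omega⟩,
            s + 1 + b', ⟨hadd _ _ hs1 hb', by simp⟩, by omega⟩
  have hmsgT_card : (msg S).ncard + 1 ≤ (msg T).ncard := by
    have hins : (insert (2 * s + 1) ((fun m => 2 * m) '' msg S)).ncard = (msg S).ncard + 1 := by
      rw [Set.ncard_insert_of_notMem (by rintro ⟨m, _, h⟩; simp only [] at h; omega) (hmsgS_fin.image _),
        Set.ncard_image_of_injective _ hinj2]
    calc (msg S).ncard + 1 = _ := hins.symm
      _ ≤ (msg T).ncard := Set.ncard_le_ncard hmem_msg hmsgT_fin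
  -- genus S ≥ 1 and E ≥ 1
  have hgpos : 1 ≤ genus S := by
    have : 0 < {x | x ∉ S}.ncard := (Set.ncard_pos hfin).mpr hGne
    exact this
  have hE : 1 ≤ (msg S).ncard := by
    by_contra h
    have : (msg S).ncard = 0 := by omega
    rw [this] at hwilf
    simp at hwilf
    omega
  obtain ⟨E', hE'⟩ : ∃ E', (msg S).ncard = E' + 1 := ⟨(msg S).ncard - 1, by omega⟩
  rw [hE'] at hwilf
  simp only [Nat.add_sub_cancel] at hwilf
  -- final arithmetic
  have key : 2 * genus S + s ≤ (E' + 1) * (2 * nsmall S + s) := by nlinarith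
  calc genus T ≤ 2 * genus S + s := hgenusT
    _ ≤ (E' + 1) * (2 * nsmall S + s) := key
    _ ≤ ((msg T).ncard - 1) * nsmall T := by
        apply Nat.mul_le_mul _ hnsmallT
        omega
end

section
/- If S is a Coe-semigroup with embedding dimension 3 and minimal generators n₁ < n₂ < n₃ with n₃ odd, then F(S) = n₃ + n₁n₂/2 - n₁ - n₂ and g(S) = (n₃-1)/2 + (n₁/2 - 1)(n₂/2 - 1); in particular 2g(S) = F(S) + 1, so S is symmetric. -/
open Pointwise

/-- Canonical representation: membership in ⟨a,b⟩ over ℤ via the residue x₀. -/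
lemma aux_rep_iff (a b : ℕ) (hco : IsCoprime (a:ℤ) (b:ℤ)) (m x₀ : ℤ)
    (h0 : 0 ≤ x₀) (h1 : x₀ < b) (hd : (b:ℤ) ∣ m - a * x₀) :
    (∃ p q : ℕ, m = p * a + q * b) ↔ ∃ y : ℤ, 0 ≤ y ∧ m = a * x₀ + b * y := by
  have hb : (0:ℤ) < b := lt_of_le_of_lt h0 h1
  constructor
  · rintro ⟨p, q, rfl⟩
    have hd2 : (b:ℤ) ∣ (p:ℤ) - x₀ := by
      have h3 : (b:ℤ) ∣ (a:ℤ) * ((p:ℤ) - x₀) := by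
        have : (a:ℤ) * ((p:ℤ) - x₀) = ((p:ℤ) * a + q * b - a * x₀) - b * q := by ring
        rw [this]
        exact dvd_sub hd ⟨q, rfl⟩
      exact (hco.symm).dvd_of_dvd_mul_left h3
    obtain ⟨k, hk⟩ := hd2
    have hk0 : 0 ≤ k := by
      by_contra hneg
      push_neg at hneg
      have : k ≤ -1 := by omega
      have : (b:ℤ) * k ≤ b * (-1) := by
        exact mul_le_mul_of_nonneg_left this (le_of_lt hb)
      have hp : (0:ℤ) ≤ p := Int.natCast_nonneg p
      linarith
    refine ⟨a * k + q, by positivity, ?_⟩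
    linear_combination (a:ℤ) * hk
  · rintro ⟨y, hy, hm⟩
    refine ⟨x₀.toNat, y.toNat, ?_⟩
    rw [hm]
    push_cast [Int.toNat_of_nonneg h0, Int.toNat_of_nonneg hy]
    ring

/-- Sylvester symmetry over ℤ for the numerical semigroup ⟨a,b⟩. -/
lemma aux_sym (a b : ℕ) (ha : 0 < a) (hb : 0 < b) (hco : Nat.Coprime a b) (m : ℤ) :
    (∃ p q : ℕ, m = p * a + q * b) ↔
      ¬ (∃ p q : ℕ, ((a:ℤ) * b - a - b) - m = p * a + q * b) := by
  have hbz : (0:ℤ) < b := by exact_mod_cast hb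
  have hco' : IsCoprime (a:ℤ) (b:ℤ) := by
    rw [Int.isCoprime_iff_gcd_eq_one]
    exact_mod_cast hco
  obtain ⟨u, w, huw⟩ := id hco'
  set x₀ : ℤ := (u * m) % b with hx₀
  have h0 : 0 ≤ x₀ := Int.emod_nonneg _ (by positivity)
  have h1 : x₀ < b := Int.emod_lt_of_pos _ hbz
  have hd : (b:ℤ) ∣ m - a * x₀ := by
    refine ⟨m * w + a * ((u * m) / b), ?_⟩
    have hmod : x₀ = u * m - b * ((u * m) / b) := by
      rw [hx₀, Int.emod_def]
    rw [hmod]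
    linear_combination (-(m : ℤ)) * huw
  obtain ⟨y₀, hy₀⟩ := hd
  have hd' : (b:ℤ) ∣ m - a * x₀ := ⟨y₀, hy₀⟩
  have hL := aux_rep_iff a b hco' m x₀ h0 h1 hd'
  have hd2 : (b:ℤ) ∣ (((a:ℤ) * b - a - b) - m) - a * ((b:ℤ) - 1 - x₀) := by
    refine ⟨-1 - y₀, ?_⟩
    linear_combination -hy₀
  have hR := aux_rep_iff a b hco' (((a:ℤ) * b - a - b) - m) ((b:ℤ) - 1 - x₀)
    (by omega) (by omega) hd2
  rw [hL, hR]
  have hLy : (∃ y : ℤ, 0 ≤ y ∧ m = a * x₀ + b * y) ↔ 0 ≤ y₀ := by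
    constructor
    · rintro ⟨y, hy, hmy⟩
      have : (b:ℤ) * y = b * y₀ := by linarith
      have : y = y₀ := mul_left_cancel₀ (by positivity) this
      omega
    · intro h
      exact ⟨y₀, h, by linarith⟩
  have hRy : (∃ y : ℤ, 0 ≤ y ∧ ((a:ℤ) * b - a - b) - m = a * ((b:ℤ) - 1 - x₀) + b * y)
      ↔ 0 ≤ -1 - y₀ := by
    constructor
    · rintro ⟨y, hy, hmy⟩
      have h2 : (b:ℤ) * y = b * (-1 - y₀) := by linarith
      have : y = -1 - y₀ := mul_left_cancel₀ (by positivity) h2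
      omega
    · intro h
      exact ⟨-1 - y₀, h, by linarith⟩
  rw [hLy, hRy]
  omega

theorem stmt_19 (S : Set ℕ) (hS : IsCoe S) (n₁ n₂ n₃ : ℕ)
    (hmsg : msg S = {n₁, n₂, n₃}) (h12 : n₁ < n₂) (h23 : n₂ < n₃) (hodd : Odd n₃) :
    frob S = n₃ + n₁ * n₂ / 2 - n₁ - n₂ ∧
    genus S = (n₃ - 1) / 2 + (n₁ / 2 - 1) * (n₂ / 2 - 1) ∧
    2 * genus S = frob S + 1 := by
  obtain ⟨⟨h0S, hadd, hfin⟩, hcoe⟩ := hS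
  have hmm : ∀ x, x ∈ msg S ↔ ((x ∈ S ∧ x ≠ 0) ∧
      ¬ ∃ a, (a ∈ S ∧ a ≠ 0) ∧ ∃ b, (b ∈ S ∧ b ≠ 0) ∧ x = a + b) := by
    intro x; simp [msg]
  have hn1m : n₁ ∈ msg S := by rw [hmsg]; left; rfl
  have hn2m : n₂ ∈ msg S := by rw [hmsg]; right; left; rfl
  have hn3m : n₃ ∈ msg S := by rw [hmsg]; right; right; rfl
  rw [hmm] at hn1m hn2m hn3m
  have hn1S := hn1m.1.1
  have hn2S := hn2m.1.1
  have hn3S := hn3m.1.1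
  -- multiples and generated elements
  have hmul : ∀ (k n : ℕ), n ∈ S → k * n ∈ S := by
    intro k n hn
    induction k with
    | zero => simpa using h0S
    | succ k ih => have := hadd _ _ ih hn; simpa [Nat.succ_mul] using this
  have hgen : ∀ p q r : ℕ, p * n₁ + q * n₂ + r * n₃ ∈ S := fun p q r =>
    hadd _ _ (hadd _ _ (hmul p n₁ hn1S) (hmul q n₂ hn2S)) (hmul r n₃ hn3S)
  -- every element of S is generated by n₁, n₂, n₃
  have hrep : ∀ x, x ∈ S → ∃ p q r : ℕ, x = p * n₁ + q * n₂ + r * n₃ := by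
    intro x
    induction x using Nat.strong_induction_on with
    | _ x ih =>
      intro hx
      by_cases hx0 : x = 0
      · exact ⟨0, 0, 0, by simp [hx0]⟩
      by_cases hxm : x ∈ msg S
      · rw [hmsg] at hxm
        rcases (by simpa using hxm : x = n₁ ∨ x = n₂ ∨ x = n₃) with rfl | rfl | rfl
        · exact ⟨1, 0, 0, by ring⟩
        · exact ⟨0, 1, 0, by ring⟩
        · exact ⟨0, 0, 1, by ring⟩
      · rw [hmm] at hxm
        have hsum : ∃ a, (a ∈ S ∧ a ≠ 0) ∧ ∃ b, (b ∈ S ∧ b ≠ 0) ∧ x = a + b := by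
          by_contra hcon
          exact hxm ⟨⟨hx, hx0⟩, hcon⟩
        obtain ⟨u, ⟨huS, hu0⟩, v, ⟨hvS, hv0⟩, rfl⟩ := hsum
        obtain ⟨p, q, r, hpqr⟩ := ih u (by omega) huS
        obtain ⟨p', q', r', hpqr'⟩ := ih v (by omega) hvS
        exact ⟨p + p', q + q', r + r', by rw [hpqr, hpqr']; ring⟩
  have hmemS : ∀ x, x ∈ S ↔ ∃ p q r : ℕ, x = p * n₁ + q * n₂ + r * n₃ := fun x =>
    ⟨hrep x, fun ⟨p, q, r, h⟩ => h ▸ hgen p q r⟩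
  -- case helpers
  have hc2 : ∀ k n : ℕ, k * n = 0 ∨ n ≤ k * n := by
    intro k n
    match k with
    | 0 => left; ring
    | (k+1) => right; have : (k+1) * n = k * n + n := by ring
               omega
  have hc3 : ∀ k n : ℕ, k * n = 0 ∨ k * n = n ∨ 2 * n ≤ k * n := by
    intro k n
    match k with
    | 0 => left; ring
    | 1 => right; left; ring
    | (k+2) => right; right; have : (k+2) * n = k * n + 2 * n := by ring
               omega
  -- n₁ ≥ 2
  have h2n1 : 2 ≤ n₁ := by
    rcases Nat.lt_or_ge n₁ 2 with h | h
    · exfalso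
      have hn1' : n₁ = 1 := by have := hn1m.1.2; omega
      have hb : n₂ - 1 ∈ S := by
        rw [hmemS]; exact ⟨n₂ - 1, 0, 0, by rw [hn1']; ring⟩
      exact hn2m.2 ⟨n₁, ⟨hn1S, hn1m.1.2⟩, n₂ - 1, ⟨hb, by omega⟩, by omega⟩
    · exact h
  -- n₁ even
  have he1 : ¬ Odd n₁ := by
    intro ho
    obtain ⟨hl, _⟩ := hcoe n₁ hn1S ho
    obtain ⟨p, q, r, he⟩ := hrep (n₁ - 1) hl
    have c1 := hc2 p n₁
    have c2 := hc2 q n₂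
    have c3 := hc2 r n₃
    omega
  -- n₂ even
  have he2 : ¬ Odd n₂ := by
    intro ho
    obtain ⟨hl, hr⟩ := hcoe n₂ hn2S ho
    obtain ⟨p, q, r, he⟩ := hrep (n₂ - 1) hl
    obtain ⟨p', q', r', he'⟩ := hrep (n₂ + 1) hr
    -- n₂ - 1 = p * n₁
    have c2 := hc2 q n₂; have c3 := hc2 r n₃
    have hq : q * n₂ = 0 := by omega
    have hr3 : r * n₃ = 0 := by omega
    have hodd3 : n₃ ≠ n₂ + 1 := by
      rintro rfl
      obtain ⟨t, ht⟩ := hodd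
      obtain ⟨t', ht'⟩ := ho
      omega
    have c2' := hc3 q' n₂; have c3' := hc3 r' n₃
    have c1' := hc2 p' n₁
    have hq' : q' * n₂ = 0 := by omega
    have hr3' : r' * n₃ = 0 := by omega
    -- so n₂ - 1 = p n₁ and n₂ + 1 = p' n₁, hence n₁ ∣ 2, n₁ = 2
    have hpp : p < p' := by
      have h1 : p * n₁ < p' * n₁ := by omega
      exact Nat.lt_of_mul_lt_mul_right h1
    have h2 : (p' - p) * n₁ = 2 := by
      have : p' * n₁ - p * n₁ = 2 := by omega
      rw [← this, Nat.sub_mul]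
    have hn12 : n₁ = 2 := by
      have : n₁ ≤ (p' - p) * n₁ := Nat.le_mul_of_pos_left n₁ (by omega)
      omega
    -- then n₃ = n₂ + k * n₁, contradiction with minimality of n₃
    have hk : n₃ - n₂ ∈ S := by
      rw [hmemS]
      refine ⟨(n₃ - n₂) / 2, 0, 0, ?_⟩
      obtain ⟨t, ht⟩ := hodd
      obtain ⟨t', ht'⟩ := ho
      rw [hn12]; omega
    exact hn3m.2 ⟨n₂, ⟨hn2S, by omega⟩, n₃ - n₂, ⟨hk, by omega⟩, by omega⟩
  -- extract a, b, s
  have hpar1 : n₁ % 2 = 0 := by have := Nat.odd_iff.not.mp he1; omega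
  have hpar2 : n₂ % 2 = 0 := by have := Nat.odd_iff.not.mp he2; omega
  obtain ⟨a, hn1e⟩ : ∃ a, n₁ = 2 * a := ⟨n₁ / 2, by omega⟩
  obtain ⟨b, hn2e⟩ : ∃ b, n₂ = 2 * b := ⟨n₂ / 2, by omega⟩
  obtain ⟨s, hn3e⟩ : ∃ s, n₃ = 2 * s + 1 := by
    obtain ⟨t, ht⟩ := hodd; exact ⟨t, by omega⟩
  have ha : 0 < a := by omega
  have hb : 0 < b := by omega
  -- s and s+1 are representable by a, b
  have hsrep : ∃ p q : ℕ, s = p * a + q * b := by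
    obtain ⟨p, q, r, he⟩ := hrep (n₃ - 1) (hcoe n₃ hn3S hodd).1
    have c3 := hc2 r n₃
    have e1 : p * n₁ = 2 * (p * a) := by rw [hn1e]; ring
    have e2 : q * n₂ = 2 * (q * b) := by rw [hn2e]; ring
    exact ⟨p, q, by omega⟩
  have hs1rep : ∃ p q : ℕ, s + 1 = p * a + q * b := by
    obtain ⟨p, q, r, he⟩ := hrep (n₃ + 1) (hcoe n₃ hn3S hodd).2
    have c3 := hc3 r n₃
    have c1 := hc2 p n₁
    have c2 := hc2 q n₂
    have e1 : p * n₁ = 2 * (p * a) := by rw [hn1e]; ring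
    have e2 : q * n₂ = 2 * (q * b) := by rw [hn2e]; ring
    exact ⟨p, q, by omega⟩
  -- a and b are coprime
  have hab : Nat.Coprime a b := by
    obtain ⟨p, q, hpq⟩ := hsrep
    obtain ⟨p', q', hpq'⟩ := hs1rep
    have hd1 : Nat.gcd a b ∣ s := by
      rw [hpq]
      exact dvd_add ((Nat.gcd_dvd_left a b).mul_left p) ((Nat.gcd_dvd_right a b).mul_left q)
    have hd2 : Nat.gcd a b ∣ s + 1 := by
      rw [hpq']
      exact dvd_add ((Nat.gcd_dvd_left a b).mul_left p') ((Nat.gcd_dvd_right a b).mul_left q')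
    have : Nat.gcd a b ∣ 1 := by simpa using Nat.dvd_sub hd2 hd1
    exact Nat.dvd_one.mp this
  -- representation of n₃
  obtain ⟨P₃, Q₃, h3r⟩ : ∃ P Q : ℕ, n₃ = P * a + Q * b := by
    obtain ⟨p, q, hpq⟩ := hsrep
    obtain ⟨p', q', hpq'⟩ := hs1rep
    refine ⟨p + p', q + q', ?_⟩
    have e1 : (p + p') * a = p * a + p' * a := by ring
    have e2 : (q + q') * b = q * b + q' * b := by ring
    omega
  -- membership characterization over ℕ
  have hmemN : ∀ x, x ∈ S ↔
      ∃ P Q : ℕ, x = 2 * (P * a + Q * b) ∨ x = n₃ + 2 * (P * a + Q * b) := by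
    intro x
    constructor
    · intro hx
      obtain ⟨p, q, r, rfl⟩ := hrep x hx
      rcases Nat.even_or_odd r with ⟨r', rfl⟩ | ⟨r', rfl⟩
      · refine ⟨p + r' * P₃, q + r' * Q₃, Or.inl ?_⟩
        rw [hn1e, hn2e, h3r]; ring
      · refine ⟨p + r' * P₃, q + r' * Q₃, Or.inr ?_⟩
        rw [hn1e, hn2e, h3r]; ring
    · rintro ⟨P, Q, h | h⟩
      · rw [hmemS]; exact ⟨P, Q, 0, by rw [h, hn1e, hn2e]; ring⟩
      · rw [hmemS]; exact ⟨P, Q, 1, by rw [h, hn1e, hn2e]; ring⟩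
  -- membership characterization over ℤ
  have hn3z : (n₃ : ℤ) = 2 * (s : ℤ) + 1 := by omega
  have hmemZ : ∀ x : ℕ, x ∈ S ↔
      ∃ t : ℤ, (∃ p q : ℕ, t = (p:ℤ) * a + q * b) ∧
        ((x:ℤ) = 2 * t ∨ (x:ℤ) = n₃ + 2 * t) := by
    intro x
    rw [hmemN]
    constructor
    · rintro ⟨P, Q, h | h⟩
      · exact ⟨(P:ℤ) * a + Q * b, ⟨P, Q, rfl⟩, Or.inl (by rw [h]; push_cast; ring)⟩
      · exact ⟨(P:ℤ) * a + Q * b, ⟨P, Q, rfl⟩, Or.inr (by rw [h]; push_cast; ring)⟩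
    · rintro ⟨t, ⟨p, q, rfl⟩, h | h⟩
      · refine ⟨p, q, Or.inl ?_⟩
        have e : ((2 * (p * a + q * b) : ℕ) : ℤ) = 2 * ((p:ℤ) * a + q * b) := by
          push_cast; ring
        omega
      · refine ⟨p, q, Or.inr ?_⟩
        have e : ((n₃ + 2 * (p * a + q * b) : ℕ) : ℤ) = (n₃:ℤ) + 2 * ((p:ℤ) * a + q * b) := by
          push_cast; ring
        omega
  -- the Frobenius number candidate
  obtain ⟨F, hF⟩ : ∃ F, F = n₃ + 2 * (a * b) - 2 * a - 2 * b := ⟨_, rfl⟩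
  have habge : a ≤ a * b := Nat.le_mul_of_pos_right a hb
  have hFz : (F : ℤ) = (n₃ : ℤ) + 2 * ((a:ℤ) * b) - 2 * a - 2 * b := by
    have h3 : F + 2 * a + 2 * b = n₃ + 2 * (a * b) := by omega
    have := congrArg (Nat.cast : ℕ → ℤ) h3
    push_cast at this
    linarith
  -- symmetry of S with respect to F
  have hsym : ∀ x : ℕ, x ≤ F → (x ∈ S ↔ (F - x) ∉ S) := by
    intro x hx
    have hFxz : ((F - x : ℕ) : ℤ) = (F : ℤ) - (x : ℤ) := by omega
    rcases Nat.even_or_odd x with ⟨u, hu⟩ | ⟨u, hu⟩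
    · -- x even
      have hxS : x ∈ S ↔ (∃ p q : ℕ, (u:ℤ) = p * a + q * b) := by
        rw [hmemZ]
        constructor
        · rintro ⟨t, hre, h | h⟩
          · have ht : t = (u : ℤ) := by omega
            rwa [ht] at hre
          · exfalso; omega
        · intro hre
          exact ⟨(u:ℤ), hre, Or.inl (by omega)⟩
      have hFxS : (F - x) ∈ S ↔
          (∃ p q : ℕ, ((a:ℤ) * b - a - b) - (u:ℤ) = p * a + q * b) := by
        rw [hmemZ]
        constructor
        · rintro ⟨t, hre, h | h⟩
          · exfalso; omega
          · have ht : t = ((a:ℤ) * b - a - b) - (u:ℤ) := by omega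
            rwa [ht] at hre
        · intro hre
          exact ⟨((a:ℤ) * b - a - b) - (u:ℤ), hre, Or.inr (by omega)⟩
      rw [hxS, hFxS]
      exact aux_sym a b ha hb hab (u : ℤ)
    · -- x odd
      have hxS : x ∈ S ↔ (∃ p q : ℕ, (u:ℤ) - s = p * a + q * b) := by
        rw [hmemZ]
        constructor
        · rintro ⟨t, hre, h | h⟩
          · exfalso; omega
          · have ht : t = (u : ℤ) - s := by omega
            rwa [ht] at hre
        · intro hre
          exact ⟨(u:ℤ) - s, hre, Or.inr (by omega)⟩
      have hFxS : (F - x) ∈ S ↔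
          (∃ p q : ℕ, ((a:ℤ) * b - a - b) - ((u:ℤ) - s) = p * a + q * b) := by
        rw [hmemZ]
        constructor
        · rintro ⟨t, hre, h | h⟩
          · have ht : t = ((a:ℤ) * b - a - b) - ((u:ℤ) - s) := by omega
            rwa [ht] at hre
          · exfalso; omega
        · intro hre
          exact ⟨((a:ℤ) * b - a - b) - ((u:ℤ) - s), hre, Or.inl (by omega)⟩
      rw [hxS, hFxS]
      exact aux_sym a b ha hb hab ((u:ℤ) - s)
  -- F is a gap
  have hFnot : F ∉ S := by
    intro hFS
    have h := (hsym F le_rfl).mp hFS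
    rw [Nat.sub_self] at h
    exact h h0S
  -- everything above F is in S
  have hbigRep : ∀ v : ℤ, (a:ℤ) * b - a - b < v → ∃ p q : ℕ, v = p * a + q * b := by
    intro v hv
    rw [aux_sym a b ha hb hab]
    rintro ⟨p, q, h⟩
    have h0 : (0:ℤ) ≤ (p:ℤ) * a + q * b := by positivity
    omega
  have hbig : ∀ x : ℕ, F < x → x ∈ S := by
    intro x hgt
    rw [hmemZ]
    rcases Nat.even_or_odd x with ⟨u, hu⟩ | ⟨u, hu⟩
    · refine ⟨(u:ℤ), hbigRep (u:ℤ) (by omega), Or.inl (by omega)⟩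
    · refine ⟨(u:ℤ) - s, hbigRep ((u:ℤ) - s) (by omega), Or.inr (by omega)⟩
  -- frob S = F
  have hub : ∀ y ∈ {x : ℕ | x ∉ S}, y ≤ F := by
    intro y hy
    by_contra h
    exact hy (hbig y (by omega))
  have hfrob : frob S = F := by
    refine le_antisymm (csSup_le ⟨F, hFnot⟩ hub) (le_csSup ⟨F, fun y hy => hub y hy⟩ hFnot)
  -- genus counting
  classical
  have hgapset : {x : ℕ | x ∉ S} =
      ↑((Finset.range (F + 1)).filter (fun x => x ∉ S)) := by
    ext x
    simp only [Finset.coe_filter, Finset.mem_range, Set.mem_setOf_eq]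
    constructor
    · intro hx
      exact ⟨by have := hub x hx; omega, hx⟩
    · intro hx
      exact hx.2
  have hgenus : genus S = ((Finset.range (F + 1)).filter (fun x => x ∉ S)).card := by
    rw [genus, hgapset, Set.ncard_coe_finset]
  have hsplit : ((Finset.range (F + 1)).filter (fun x => x ∈ S)).card
      + ((Finset.range (F + 1)).filter (fun x => x ∉ S)).card = F + 1 := by
    have := Finset.card_filter_add_card_filter_not
      (s := Finset.range (F + 1)) (p := fun x => x ∈ S)
    simpa using this
  have hcardeq : ((Finset.range (F + 1)).filter (fun x => x ∈ S)).card
      = ((Finset.range (F + 1)).filter (fun x => x ∉ S)).card := by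
    apply Finset.card_bij (fun x _ => F - x)
    · intro x hx
      simp only [Finset.mem_filter, Finset.mem_range] at hx ⊢
      have hxle : x ≤ F := by omega
      exact ⟨by omega, (hsym x hxle).mp hx.2⟩
    · intro x hx y hy h
      simp only [Finset.mem_filter, Finset.mem_range] at hx hy
      omega
    · intro y hy
      simp only [Finset.mem_filter, Finset.mem_range] at hy
      refine ⟨F - y, ?_, by omega⟩
      simp only [Finset.mem_filter, Finset.mem_range]
      have hyF : F - (F - y) = y := by omega
      refine ⟨by omega, ?_⟩
      rw [hsym (F - y) (by omega), hyF]
      exact hy.2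
  have h2g : 2 * genus S = F + 1 := by
    rw [hgenus]
    omega
  -- final assembly
  have hprod : n₁ * n₂ = 4 * (a * b) := by rw [hn1e, hn2e]; ring
  obtain ⟨a', rfl⟩ : ∃ a', a = a' + 1 := ⟨a - 1, by omega⟩
  obtain ⟨b', rfl⟩ : ∃ b', b = b' + 1 := ⟨b - 1, by omega⟩
  have hexp : (a' + 1) * (b' + 1) = a' * b' + a' + b' + 1 := by ring
  have hq1 : n₁ / 2 = a' + 1 := by omega
  have hq2 : n₂ / 2 = b' + 1 := by omega
  refine ⟨by omega, ?_, by omega⟩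
  rw [hq1, hq2]
  simp only [Nat.add_sub_cancel]
  omega
end
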